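/- arXiv:0709.3044 — 8 statements merged into one kernel-verified Lean document; each statement's English description precedes it below -/
import Mathlib

section
/- The Hankel determinant of Catalan numbers det_{0≤i,j≤n-1}(C_{i+j}) equals 1 for every positive integer n. -/
/-- Number of nonnegative lattice paths (ballot-type recursion). -/
def bf : ℕ → ℕ → ℕ
  | 0, 0 => 1
  | 0, _+1 => 0
  | m+1, 0 => bf m 1
  | m+1, h+1 => bf m h + bf m (h+2)

lemma bf_eq_zero_of_lt : ∀ m h, m < h → bf m h = 0 := by
  intro m
  induction m with
  | zero => intro h hh; match h, hh with | (k+1), _ => rfl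
  | succ m ih =>
    intro h hh
    match h, hh with
    | (h+1), hh =>
      show bf m h + bf m (h+2) = 0
      rw [ih h (by omega), ih (h+2) (by omega)]

lemma bf_self : ∀ m, bf m m = 1 := by
  intro m
  induction m with
  | zero => rfl
  | succ m ih =>
    show bf m m + bf m (m+2) = 1
    rw [ih, bf_eq_zero_of_lt m (m+2) (by omega)]

lemma bf_odd : ∀ m h, (m + h) % 2 = 1 → bf m h = 0 := by
  intro m
  induction m with
  | zero =>
    intro h hh
    match h, hh with
    | (k+1), _ => rfl
  | succ m ih =>
    intro h hh
    match h with
    | 0 => show bf m 1 = 0; exact ih 1 (by omega)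
    | (h+1) =>
      show bf m h + bf m (h+2) = 0
      rw [ih h (by omega), ih (h+2) (by omega)]

lemma bf_formula : ∀ m h j, m = h + 2*j → (h+j+1) * bf m h = (h+1) * Nat.choose m j := by
  intro m
  induction m with
  | zero =>
    intro h j hm
    have hh : h = 0 := by omega
    have hj : j = 0 := by omega
    subst hh; subst hj; rfl
  | succ m ih =>
    intro h j hm
    match h with
    | 0 =>
      -- m+1 = 2j, j ≥ 1
      match j, hm with
      | (j+1), hm =>
        have hm' : m = 1 + 2*j := by omega
        have E := ih 1 j hm'
        show (0+(j+1)+1) * bf m 1 = (0+1) * Nat.choose (m+1) (j+1)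
        -- E : (1+j+1) * bf m 1 = 2 * choose m j
        -- choose (m+1) (j+1) = choose m j + choose m (j+1), and choose m (j+1) = choose m j
        have hc : Nat.choose (m+1) (j+1) = Nat.choose m j + Nat.choose m (j+1) :=
          Nat.choose_succ_succ m j
        have hsym : Nat.choose m (j+1) = Nat.choose m j := by
          have h1 : j + 1 ≤ m := by omega
          have := Nat.choose_symm h1
          rw [show m - (j+1) = j from by omega] at this
          omega
        rw [hc, hsym]
        calc (0+(j+1)+1) * bf m 1 = (1+j+1) * bf m 1 := by ring_nf
          _ = (1+1) * Nat.choose m j := E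
          _ = (0+1) * (Nat.choose m j + Nat.choose m j) := by ring
    | (h+1) =>
      have hm' : m = h + 2*j := by omega
      have E1 := ih h j hm'
      show (h+1+j+1) * (bf m h + bf m (h+2)) = (h+1+1) * Nat.choose (m+1) j
      match j with
      | 0 =>
        have : bf m (h+2) = 0 := bf_eq_zero_of_lt m (h+2) (by omega)
        have hb : bf m h = 1 := by
          have : m = h := by omega
          rw [this]; exact bf_self h
        rw [this, hb]
        simp
      | (j+1) =>
        have E2 := ih (h+2) j (by omega)
        have E3 : Nat.choose m (j+1) * (j+1) = Nat.choose m j * (m - j) :=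
          Nat.choose_succ_right_eq m j
        have hmj : m - j = h + j + 2 := by omega
        rw [hmj] at E3
        have hc : Nat.choose (m+1) (j+1) = Nat.choose m j + Nat.choose m (j+1) :=
          Nat.choose_succ_succ m j
        rw [hc]
        -- cancel factor (h+j+2) after moving to ℤ
        have key : ((h:ℤ)+j+2) * (((h+1+(j+1)+1) * (bf m h + bf m (h+2))) : ℕ)
            = ((h:ℤ)+j+2) * (((h+1+1) * (Nat.choose m j + Nat.choose m (j+1))) : ℕ) := by
          have E1' : ((h:ℤ)+(j+1)+1) * bf m h = ((h:ℤ)+1) * Nat.choose m (j+1) := by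
            exact_mod_cast congrArg (Nat.cast : ℕ → ℤ) E1
          have E2' : ((h:ℤ)+2+j+1) * bf m (h+2) = ((h:ℤ)+2+1) * Nat.choose m j := by
            exact_mod_cast congrArg (Nat.cast : ℕ → ℤ) E2
          have E3' : (Nat.choose m (j+1) : ℤ) * (j+1) = (Nat.choose m j : ℤ) * ((h:ℤ)+j+2) := by
            exact_mod_cast congrArg (Nat.cast : ℕ → ℤ) E3
          push_cast
          linear_combination ((h:ℤ)+j+3) * E1' + ((h:ℤ)+j+2) * E2' - E3'
        have := mul_left_cancel₀ (by positivity : ((h:ℤ)+j+2) ≠ 0) key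
        exact_mod_cast this

lemma bf_two_mul_zero (m : ℕ) : bf (2*m) 0 = catalan m := by
  have h1 := bf_formula (2*m) 0 m (by ring)
  have h2 := succ_mul_catalan_eq_centralBinom m
  rw [Nat.centralBinom] at h2
  have : (m+1) * bf (2*m) 0 = (m+1) * catalan m := by
    rw [show 0+m+1 = m+1 from by omega] at h1
    simpa [h2] using h1
  exact Nat.eq_of_mul_eq_mul_left (by omega) this

open Finset in
lemma bf_step (a b : ℕ) :
    ∑ h ∈ range (a+b+2), bf (a+1) h * bf b h
      = ∑ h ∈ range (a+b+2), bf a h * bf (b+1) h := by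
  have expand : ∀ (x y : ℕ),
      ∑ h ∈ range (x+y+2), bf (x+1) h * bf y h
        = (∑ h ∈ range (x+y+1), bf x h * bf y (h+1))
          + (∑ h ∈ range (x+y+1), bf x (h+1) * bf y h) := by
    intro x y
    rw [Finset.sum_range_succ' (fun h => bf (x+1) h * bf y h) (x+y+1)]
    have h0 : bf (x+1) 0 = bf x 1 := rfl
    have hsplit : ∀ h, bf (x+1) (h+1) * bf y (h+1)
        = bf x h * bf y (h+1) + bf x (h+2) * bf y (h+1) := by
      intro h; show (bf x h + bf x (h+2)) * bf y (h+1) = _; ring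
    rw [Finset.sum_congr rfl (fun h _ => hsplit h), Finset.sum_add_distrib, h0]
    have shift : (∑ h ∈ range (x+y+1), bf x (h+2) * bf y (h+1)) + bf x 1 * bf y 0
        = ∑ h ∈ range (x+y+2), bf x (h+1) * bf y h := by
      rw [Finset.sum_range_succ' (fun h => bf x (h+1) * bf y h) (x+y+1)]
    have top : bf x (x+y+1+1) * bf y (x+y+1) = 0 := by
      rw [bf_eq_zero_of_lt x _ (by omega)]; ring
    rw [add_assoc, shift, Finset.sum_range_succ (fun h => bf x (h+1) * bf y h) (x+y+1),
      top, add_zero]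
  have L := expand a b
  have R := expand b a
  rw [show b+a+2 = a+b+2 from by omega, show b+a+1 = a+b+1 from by omega] at R
  have R' : ∑ h ∈ range (a+b+2), bf a h * bf (b+1) h
      = (∑ h ∈ range (a+b+1), bf b h * bf a (h+1))
        + (∑ h ∈ range (a+b+1), bf b (h+1) * bf a h) := by
    rw [← R]; exact Finset.sum_congr rfl (fun h _ => mul_comm _ _)
  rw [L, R', add_comm (∑ h ∈ range (a+b+1), bf b h * bf a (h+1))]
  congr 1 <;> exact Finset.sum_congr rfl fun h _ => mul_comm _ _

open Finset in
lemma bf_conv : ∀ b a, ∑ h ∈ range (a+b+1), bf a h * bf b h = bf (a+b) 0 := by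
  intro b
  induction b with
  | zero =>
    intro a
    rw [Finset.sum_eq_single 0]
    · simp [bf]
    · intro h _ hne
      match h, hne with
      | (h+1), _ => show bf a (h+1) * 0 = 0; ring
    · intro habs; simp at habs
  | succ b ih =>
    intro a
    have := (bf_step a b).symm
    rw [show a+(b+1)+1 = a+b+2 from by omega, this,
      show a+b+2 = (a+1)+b+1 from by omega, ih (a+1),
      show a+1+b = a+(b+1) from by omega]

open Finset in
lemma bf_even_sum (i j M : ℕ) :
    ∑ h ∈ range (2*M+1), bf (2*i) h * bf (2*j) h
      = ∑ k ∈ range (M+1), bf (2*i) (2*k) * bf (2*j) (2*k) := by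
  induction M with
  | zero => simp
  | succ M ih =>
    rw [show 2*(M+1)+1 = (2*M+1)+1+1 from by omega,
      Finset.sum_range_succ, Finset.sum_range_succ _ (2*M+1), ih,
      Finset.sum_range_succ _ (M+1)]
    have hodd : bf (2*i) (2*M+1) = 0 := bf_odd _ _ (by omega)
    rw [hodd]
    ring_nf

open Finset in
lemma bf_cap (i : ℕ) (g : ℕ → ℕ) (N : ℕ) (hN : i+1 ≤ N) :
    ∑ k ∈ range N, bf (2*i) (2*k) * g k = ∑ k ∈ range (i+1), bf (2*i) (2*k) * g k := by
  refine (Finset.sum_subset (Finset.range_subset_range.mpr hN) ?_).symm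
  intro k _ hk
  rw [Finset.mem_range, not_lt] at hk
  rw [bf_eq_zero_of_lt (2*i) (2*k) (by omega), zero_mul]

open Finset in
lemma bf_main (n i j : ℕ) (hi : i < n) (hj : j < n) :
    ∑ k ∈ range n, bf (2*i) (2*k) * bf (2*j) (2*k) = catalan (i+j) := by
  rw [bf_cap i _ n (by omega), ← bf_cap i _ (i+j+1) (by omega), ← bf_even_sum]
  rw [show 2*(i+j)+1 = 2*i + 2*j + 1 from by omega, bf_conv,
    show 2*i+2*j = 2*(i+j) from by omega, bf_two_mul_zero]

theorem catalan_hankel_det (n : ℕ) (hn : 0 < n) :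
    Matrix.det (Matrix.of fun i j : Fin n => (catalan (i.1 + j.1) : ℤ)) = 1 := by
  set L : Matrix (Fin n) (Fin n) ℤ :=
    Matrix.of (fun i k : Fin n => (bf (2*i.1) (2*k.1) : ℤ)) with hLdef
  have hfact : (Matrix.of fun i j : Fin n => (catalan (i.1 + j.1) : ℤ)) = L * L.transpose := by
    ext i j
    simp only [Matrix.mul_apply, Matrix.transpose_apply, Matrix.of_apply, hLdef]
    rw [Fin.sum_univ_eq_sum_range
      (fun k => (bf (2*i.1) (2*k) : ℤ) * (bf (2*j.1) (2*k) : ℤ)) n]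
    rw [← bf_main n i.1 j.1 i.2 j.2]
    push_cast
    rfl
  have htri : L.BlockTriangular OrderDual.toDual := by
    intro i j hij
    have hlt : (i : ℕ) < (j : ℕ) := hij
    simp only [hLdef, Matrix.of_apply]
    rw [bf_eq_zero_of_lt (2*i.1) (2*j.1) (by omega)]
    simp
  have hL : L.det = 1 := by
    rw [Matrix.det_of_lowerTriangular L htri]
    have hdiag : ∀ i : Fin n, L i i = 1 := by
      intro i
      simp only [hLdef, Matrix.of_apply, bf_self]
      simp
    rw [Finset.prod_congr rfl (fun i _ => hdiag i)]
    simp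
  rw [hfact, Matrix.det_mul, Matrix.det_transpose, hL]
  ring
end

section
/- The Hankel determinant det_{0≤i,j≤n-1}(C_{i+j+1}) equals 1 for every positive integer n. -/
open Finset

def dd (i : ℕ) (z : ℤ) : ℤ :=
  if 0 ≤ z then ((2 * i + 1).choose z.toNat : ℤ) else 0

def LL : ℕ → ℕ → ℤ
  | 0, 0 => 1
  | 0, _ + 1 => 0
  | i + 1, 0 => 2 * LL i 0 + LL i 1
  | i + 1, k + 1 => LL i k + 2 * LL i (k + 1) + LL i (k + 2)

lemma dd_neg (i : ℕ) {z : ℤ} (h : z < 0) : dd i z = 0 := by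
  simp [dd, not_le.2 h]

lemma dd_nat (i m : ℕ) : dd i (m : ℤ) = ((2 * i + 1).choose m : ℤ) := by
  simp [dd]

lemma dd_pascal (i : ℕ) (z : ℤ) :
    dd (i + 1) z = dd i z + 2 * dd i (z - 1) + dd i (z - 2) := by
  rcases lt_or_ge z 0 with h | h
  · rw [dd_neg _ h, dd_neg _ h, dd_neg i (by omega : z - 1 < 0),
      dd_neg i (by omega : z - 2 < 0)]
    ring
  · obtain ⟨m, rfl⟩ := Int.eq_ofNat_of_zero_le h
    match m with
    | 0 => simp [dd]
    | 1 =>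
        have : ((1:ℤ) - 2) < 0 := by norm_num
        simp [dd, dd_neg i this]
        ring_nf
    | (m+2) =>
        have h1 : ((m:ℤ) + 2 - 1) = ((m+1 : ℕ) : ℤ) := by push_cast; ring
        have h2 : ((m:ℤ) + 2 - 2) = ((m : ℕ) : ℤ) := by norm_num
        have h0 : (((m:ℕ) + 2 : ℕ) : ℤ) = (m:ℤ) + 2 := by push_cast; ring
        rw [h0, h1, h2, ← h0, dd_nat, dd_nat, dd_nat, dd_nat]
        have : (2 * (i + 1) + 1).choose (m + 2)
            = (2 * i + 1).choose m + 2 * (2 * i + 1).choose (m + 1)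
              + (2 * i + 1).choose (m + 2) := by
          have e : 2 * (i + 1) + 1 = (2 * i + 1) + 1 + 1 := by ring
          rw [e, Nat.choose_succ_succ ((2*i+1)+1) (m+1),
            Nat.choose_succ_succ (2*i+1) m, Nat.choose_succ_succ (2*i+1) (m+1)]
          ring
        push_cast [this]
        ring

lemma dd_symm_succ (i : ℕ) : dd i ((i : ℤ) + 1) = dd i (i : ℤ) := by
  have h : ((i:ℤ) + 1) = ((i + 1 : ℕ) : ℤ) := by push_cast; ring
  rw [h, dd_nat, dd_nat]
  have : (2 * i + 1).choose (i + 1) = (2 * i + 1).choose i := by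
    have := Nat.choose_symm (show i + 1 ≤ 2 * i + 1 by omega)
    rw [show 2 * i + 1 - (i + 1) = i by omega] at this
    exact this.symm
  rw [this]

lemma LL_closed : ∀ i k : ℕ, LL i k = dd i ((i:ℤ) - k) - dd i ((i:ℤ) - k - 1) := by
  intro i
  induction i with
  | zero =>
      intro k
      match k with
      | 0 => simp [LL, dd]
      | k + 1 =>
          have h1 : ((0:ℤ) - (k+1:ℕ)) < 0 := by push_cast; omega
          have h2 : ((0:ℤ) - (k+1:ℕ) - 1) < 0 := by push_cast; omega
          rw [show LL 0 (k+1) = 0 from rfl]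
          push_cast
          rw [dd_neg _ (by push_cast at h1 ⊢; omega), dd_neg _ (by push_cast at h2 ⊢; omega)]
          ring
  | succ i ih =>
      intro k
      match k with
      | 0 =>
          rw [show LL (i+1) 0 = 2 * LL i 0 + LL i 1 from rfl, ih 0, ih 1,
            dd_pascal, dd_pascal]
          have hs := dd_symm_succ i
          push_cast
          ring_nf
          ring_nf at hs
          rw [hs]
          ring
      | k + 1 =>
          rw [show LL (i+1) (k+1) = LL i k + 2 * LL i (k+1) + LL i (k+2) from rfl,
            ih k, ih (k+1), ih (k+2), dd_pascal, dd_pascal]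
          push_cast
          ring_nf

lemma LL_vanish {i k : ℕ} (h : i < k) : LL i k = 0 := by
  rw [LL_closed, dd_neg _ (by push_cast; omega), dd_neg _ (by push_cast; omega)]
  ring

lemma LL_diag (i : ℕ) : LL i i = 1 := by
  rw [LL_closed, show ((i:ℤ) - i) = ((0:ℕ):ℤ) by push_cast; ring, dd_nat]
  rw [dd_neg _ (by norm_num : ((0:ℕ):ℤ) - 1 < 0)]
  simp

lemma LL_zero (j : ℕ) : LL j 0 = (catalan (j + 1) : ℤ) := by
  have hc : ((j + 2 : ℕ) : ℤ) * (catalan (j+1) : ℤ) = ((2*j+2).choose (j+1) : ℤ) := by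
    have := succ_mul_catalan_eq_centralBinom (j+1)
    rw [Nat.centralBinom] at this
    exact_mod_cast congrArg (Nat.cast : ℕ → ℤ) (by rw [show 2*(j+1) = 2*j+2 by ring] at this; exact this)
  have hne : ((j + 2 : ℕ) : ℤ) ≠ 0 := by positivity
  apply mul_left_cancel₀ hne
  rw [hc]
  match j with
  | 0 => simp [LL]
  | j + 1 =>
    rw [LL_closed]
    rw [show ((j+1:ℕ):ℤ) - ((0:ℕ):ℤ) = ((j+1:ℕ):ℤ) by push_cast; ring,
      show ((j+1:ℕ):ℤ) - 1 = ((j:ℕ):ℤ) by push_cast; ring, dd_nat, dd_nat]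
    -- goal: (j+3) * (choose (2(j+1)+1) (j+1) - choose (2(j+1)+1) j) = choose (2(j+1)+2) (j+2)
    have key : (2*(j+1)+1).choose (j+1) * (j+1) = (2*(j+1)+1).choose j * (j + 3) := by
      have := Nat.choose_succ_right_eq (2*(j+1)+1) j
      rw [show 2*(j+1)+1 - j = j + 3 by omega] at this
      exact this
    have csum : (2*(j+1)+2).choose (j+1+1) = 2 * (2*(j+1)+1).choose (j+1) := by
      rw [show (2*(j+1)+2) = (2*(j+1)+1) + 1 by ring, Nat.choose_succ_succ (2*(j+1)+1) (j+1)]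
      have h2 := Nat.choose_symm (show j + 2 ≤ 2*(j+1)+1 by omega)
      rw [show 2*(j+1)+1 - (j+2) = j+1 by omega] at h2
      rw [show (j+1).succ = j + 2 from rfl, ← h2]
      ring
    have key' : ((2*(j+1)+1).choose (j+1) : ℤ) * ((j:ℤ)+1) = ((2*(j+1)+1).choose j : ℤ) * ((j:ℤ) + 3) := by
      exact_mod_cast congrArg (Nat.cast : ℕ → ℤ) key
    have csum' : (((2*(j+1)+2).choose (j+1+1) : ℕ) : ℤ) = 2 * ((2*(j+1)+1).choose (j+1) : ℤ) := by
      exact_mod_cast congrArg (Nat.cast : ℕ → ℤ) csum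
    push_cast
    linear_combination key' - csum'

lemma LL_expand (i k : ℕ) : LL (i+1) (k+1) = LL i k + 2 * LL i (k+1) + LL i (k+2) := rfl
lemma LL_expand0 (i : ℕ) : LL (i+1) 0 = 2 * LL i 0 + LL i 1 := rfl

lemma sum_shift (i j N : ℕ) (hN : i + 1 ≤ N) :
    ∑ k ∈ Finset.range (N+1), LL (i+1) k * LL j k
    = 2 * ∑ k ∈ Finset.range (N+1), LL i k * LL j k
      + ∑ k ∈ Finset.range (N+1), LL i k * LL j (k+1)
      + ∑ k ∈ Finset.range (N+1), LL i (k+1) * LL j k := by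
  rw [Finset.sum_range_succ' (fun k => LL (i+1) k * LL j k) N,
      Finset.sum_range_succ' (fun k => LL i k * LL j k) N,
      Finset.sum_range_succ (fun k => LL i k * LL j (k+1)) N,
      Finset.sum_range_succ' (fun k => LL i (k+1) * LL j k) N]
  have hz : LL i N = 0 := LL_vanish (by omega)
  simp only [LL_expand, LL_expand0, hz, zero_mul, add_zero,
    show ∀ k : ℕ, k + 1 + 1 = k + 2 from fun k => rfl]
  simp only [add_mul]
  rw [Finset.sum_add_distrib, Finset.sum_add_distrib]
  have h2 : ∑ k ∈ Finset.range N, 2 * LL i (k+1) * LL j (k+1)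
      = 2 * ∑ k ∈ Finset.range N, LL i (k+1) * LL j (k+1) := by
    rw [Finset.mul_sum]; exact Finset.sum_congr rfl fun x _ => by ring
  rw [h2]
  ring

lemma flip_sum (M : ℕ) (f g : ℕ → ℤ) :
    ∑ k ∈ Finset.range M, f k * g k = ∑ k ∈ Finset.range M, g k * f k :=
  Finset.sum_congr rfl fun x _ => mul_comm _ _

lemma S_symm (i j N : ℕ) (h1 : i + 1 ≤ N) (h2 : j + 1 ≤ N) :
    ∑ k ∈ Finset.range (N+1), LL (i+1) k * LL j k
    = ∑ k ∈ Finset.range (N+1), LL i k * LL (j+1) k := by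
  rw [sum_shift i j N h1, flip_sum (N+1) (fun k => LL i k) (fun k => LL (j+1) k),
    sum_shift j i N h2, flip_sum (N+1) (fun k => LL j k) (fun k => LL i k),
    flip_sum (N+1) (fun k => LL j k) (fun k => LL i (k+1)),
    flip_sum (N+1) (fun k => LL j (k+1)) (fun k => LL i k)]
  ring

lemma main_sum : ∀ i j N : ℕ, i + j + 1 ≤ N →
    ∑ k ∈ Finset.range (N+1), LL i k * LL j k = (catalan (i + j + 1) : ℤ) := by
  intro i
  induction i with
  | zero =>
      intro j N _
      have : ∑ k ∈ Finset.range (N+1), LL 0 k * LL j k = LL 0 0 * LL j 0 := by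
        apply Finset.sum_eq_single_of_mem 0 (Finset.mem_range.2 (by omega))
        intro b _ hb
        match b, hb with
        | b + 1, _ => rw [show LL 0 (b+1) = 0 from rfl]; ring
      rw [this, show LL 0 0 = 1 from rfl, one_mul, LL_zero]
      norm_num
  | succ i ih =>
      intro j N h1
      rw [S_symm i j N (by omega) (by omega), ih (j+1) N (by omega),
        show i + (j+1) + 1 = i + 1 + j + 1 by ring]

theorem catalan_hankel_det_one (n : ℕ) (hn : 0 < n) :
    Matrix.det (Matrix.of fun i j : Fin n => (catalan (i.1 + j.1 + 1) : ℤ)) = 1 := by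
  classical
  set A : Matrix (Fin n) (Fin n) ℤ := Matrix.of (fun i k : Fin n => LL i.1 k.1) with hA
  have hM : (Matrix.of fun i j : Fin n => (catalan (i.1 + j.1 + 1) : ℤ)) = A * A.transpose := by
    ext i j
    rw [Matrix.mul_apply]
    simp only [hA, Matrix.transpose_apply, Matrix.of_apply]
    rw [Fin.sum_univ_eq_sum_range (fun k => LL i.1 k * LL j.1 k) n]
    have hext : ∑ k ∈ Finset.range n, LL i.1 k * LL j.1 k
        = ∑ k ∈ Finset.range (i.1 + j.1 + n + 1), LL i.1 k * LL j.1 k := by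
      apply Finset.sum_subset (Finset.range_subset_range.2 (by omega))
      intro x _ hx
      rw [LL_vanish (show i.1 < x by have := i.2; simp only [Finset.mem_range, not_lt] at hx; omega)]
      ring
    rw [hext, main_sum i.1 j.1 (i.1 + j.1 + n) (by omega)]
  have hAdet : A.det = 1 := by
    have htri : ∀ i j : Fin n, i < j → A i j = 0 := by
      intro i j hij
      exact LL_vanish (by exact_mod_cast hij)
    rw [Matrix.det_of_lowerTriangular A htri]
    have : ∀ i : Fin n, A i i = 1 := fun i => LL_diag i.1
    simp [this]
  rw [hM, Matrix.det_mul, Matrix.det_transpose, hAdet]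
  norm_num
end

section
/- The Hankel determinant det_{0≤i,j≤n-1}(C_{i+j+2}) equals n+1 for every positive integer n. -/
open Finset

def qb (m k : ℕ) : ℤ :=
  ((2 * m + 2).choose (m + 1 + k) : ℤ) - ((2 * m + 2).choose (m + 2 + k) : ℤ)

lemma qb_eq_zero {m k : ℕ} (h : m + 2 ≤ k) : qb m k = 0 := by
  unfold qb
  rw [Nat.choose_eq_zero_of_lt (by omega), Nat.choose_eq_zero_of_lt (by omega)]
  simp

lemma qb_top (m : ℕ) : qb m (m + 1) = 1 := by
  unfold qb
  rw [show m + 1 + (m + 1) = 2 * m + 2 by ring, Nat.choose_self,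
    Nat.choose_eq_zero_of_lt (by omega)]
  simp

lemma qb_zero_zero : qb 0 0 = 1 := by decide
lemma qb_zero_one : qb 0 1 = 1 := by decide

lemma choose_two_step (n r : ℕ) :
    (n + 2).choose (r + 2) = n.choose r + 2 * n.choose (r + 1) + n.choose (r + 2) := by
  simp [Nat.choose_succ_succ]
  ring

lemma qb_rec_succ (m k : ℕ) :
    qb (m + 1) (k + 1) = qb m k + 2 * qb m (k + 1) + qb m (k + 2) := by
  have key : ∀ a : ℕ, ((2 * m + 4).choose (a + 2) : ℤ) =
      (2 * m + 2).choose a + 2 * (2 * m + 2).choose (a + 1) + (2 * m + 2).choose (a + 2) := by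
    intro a
    rw [show 2 * m + 4 = 2 * m + 2 + 2 by ring]
    exact_mod_cast congrArg (Nat.cast : ℕ → ℤ) (choose_two_step (2 * m + 2) a)
  unfold qb
  rw [show 2 * (m + 1) + 2 = 2 * m + 4 by ring, show m + 1 + 1 + (k + 1) = m + 1 + k + 2 by ring,
    show m + 1 + 2 + (k + 1) = m + 2 + k + 2 by ring, key (m + 1 + k), key (m + 2 + k)]
  ring_nf

lemma qb_rec_zero (m : ℕ) : qb (m + 1) 0 = qb m 0 + qb m 1 := by
  have key : ∀ a : ℕ, ((2 * m + 4).choose (a + 2) : ℤ) =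
      (2 * m + 2).choose a + 2 * (2 * m + 2).choose (a + 1) + (2 * m + 2).choose (a + 2) := by
    intro a
    rw [show 2 * m + 4 = 2 * m + 2 + 2 by ring]
    exact_mod_cast congrArg (Nat.cast : ℕ → ℤ) (choose_two_step (2 * m + 2) a)
  have sym : (2 * m + 2).choose m = (2 * m + 2).choose (m + 2) := by
    have := Nat.choose_symm (show m + 2 ≤ 2 * m + 2 by omega)
    simpa [show 2 * m + 2 - (m + 2) = m by omega] using this
  unfold qb
  rw [show 2 * (m + 1) + 2 = 2 * m + 4 by ring, show m + 1 + 1 + 0 = m + 2 by ring,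
    show m + 1 + 2 + 0 = m + 1 + 2 by ring, show m + 2 = m + 0 + 2 by ring,
    show m + 1 + 2 = (m + 1) + 2 by ring, key (m + 0), key (m + 1)]
  have sym' : ((2 * m + 2).choose (m + 0) : ℤ) = (2 * m + 2).choose (m + 0 + 2) := by
    exact_mod_cast congrArg (Nat.cast : ℕ → ℤ) (by simpa using sym)
  rw [sym']
  ring_nf

lemma qb_catalan (m : ℕ) : qb m 0 = (catalan (m + 1) : ℤ) := by
  have h1 : (2 * m + 2).choose (m + 2) * (m + 2) = (2 * m + 2).choose (m + 1) * (m + 1) := by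
    have := Nat.choose_succ_right_eq (2 * m + 2) (m + 1)
    simpa [show 2 * m + 2 - (m + 1) = m + 1 by omega] using this
  have h2 : (m + 2) * catalan (m + 1) = (2 * m + 2).choose (m + 1) := by
    have := succ_mul_catalan_eq_centralBinom (m + 1)
    simpa [Nat.centralBinom, show 2 * (m + 1) = 2 * m + 2 by ring] using this
  have hne : ((m : ℤ) + 2) ≠ 0 := by positivity
  apply mul_left_cancel₀ hne
  unfold qb
  have h1' : ((2 * m + 2).choose (m + 2) : ℤ) * (m + 2) = (2 * m + 2).choose (m + 1) * (m + 1) := by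
    exact_mod_cast congrArg (Nat.cast : ℕ → ℤ) h1
  have h2' : ((m : ℤ) + 2) * catalan (m + 1) = (2 * m + 2).choose (m + 1) := by
    exact_mod_cast congrArg (Nat.cast : ℕ → ℤ) h2
  rw [show m + 1 + 0 = m + 1 by ring, show m + 2 + 0 = m + 2 by ring]
  linear_combination -h1' - h2'

/-- partial Gram sum -/
def Sq (i j N : ℕ) : ℤ := ∑ k ∈ Finset.range N, qb i k * qb j k

lemma Sq_swap (i j N : ℕ) (hi : i + 1 ≤ N) (hj : j + 1 ≤ N) :
    Sq (i + 1) j (N + 1) = Sq i (j + 1) (N + 1) := by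
  unfold Sq
  rw [Finset.sum_range_succ' (fun k => qb (i + 1) k * qb j k) N,
      Finset.sum_range_succ' (fun k => qb i k * qb (j + 1) k) N]
  have h1 : ∑ k ∈ Finset.range N, qb i (k + 2) * qb j (k + 1) + qb i 1 * qb j 0
      = ∑ k ∈ Finset.range N, qb i (k + 1) * qb j k := by
    rw [← Finset.sum_range_succ' (fun k => qb i (k + 1) * qb j k) N,
      Finset.sum_range_succ, qb_eq_zero (show i + 2 ≤ N + 1 by omega), zero_mul, add_zero]
  have h2 : ∑ k ∈ Finset.range N, qb i (k + 1) * qb j (k + 2) + qb i 0 * qb j 1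
      = ∑ k ∈ Finset.range N, qb i k * qb j (k + 1) := by
    rw [← Finset.sum_range_succ' (fun k => qb i k * qb j (k + 1)) N,
      Finset.sum_range_succ, qb_eq_zero (show j + 2 ≤ N + 1 by omega), mul_zero, add_zero]
  have L : ∑ k ∈ Finset.range N, qb (i + 1) (k + 1) * qb j (k + 1)
      = ∑ k ∈ Finset.range N, (qb i k * qb j (k + 1) + 2 * (qb i (k + 1) * qb j (k + 1))
          + qb i (k + 2) * qb j (k + 1)) :=
    Finset.sum_congr rfl fun k _ => by rw [qb_rec_succ]; ring
  have R : ∑ k ∈ Finset.range N, qb i (k + 1) * qb (j + 1) (k + 1)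
      = ∑ k ∈ Finset.range N, (qb i (k + 1) * qb j k + 2 * (qb i (k + 1) * qb j (k + 1))
          + qb i (k + 1) * qb j (k + 2)) :=
    Finset.sum_congr rfl fun k _ => by rw [qb_rec_succ]; ring
  rw [L, R, qb_rec_zero i, qb_rec_zero j]
  simp only [Finset.sum_add_distrib]
  linear_combination h1 - h2

lemma Sq_base (j : ℕ) : Sq 0 j (j + 3) = (catalan (j + 2) : ℤ) := by
  unfold Sq
  rw [Finset.sum_range_succ' (fun k => qb 0 k * qb j k),
      Finset.sum_range_succ' (fun k => qb 0 (k + 1) * qb j (k + 1))]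
  have hz : ∀ k ∈ Finset.range (j + 1), qb 0 (k + 1 + 1) * qb j (k + 1 + 1) = 0 := fun k _ => by
    rw [qb_eq_zero (show 0 + 2 ≤ k + 1 + 1 by omega), zero_mul]
  rw [Finset.sum_congr rfl hz, Finset.sum_const_zero, qb_zero_zero, qb_zero_one]
  have h1 := qb_rec_zero j
  have hc := qb_catalan (j + 1)
  rw [show j + 1 + 1 = j + 2 by ring] at hc
  linarith [h1, hc]

lemma Sq_diag : ∀ i j : ℕ, Sq i j (i + j + 3) = (catalan (i + j + 2) : ℤ) := by
  intro i
  induction i with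
  | zero => intro j; simpa using Sq_base j
  | succ i ih =>
    intro j
    have hswap := Sq_swap i j (i + j + 3) (by omega) (by omega)
    rw [show i + 1 + j + 3 = i + j + 3 + 1 by ring, hswap,
      show i + j + 3 + 1 = i + (j + 1) + 3 by ring, ih (j + 1),
      show i + (j + 1) + 2 = i + 1 + j + 2 by ring]

lemma Sq_stable (i j N M : ℕ) (hN : i + 2 ≤ N) (hM : N ≤ M) : Sq i j M = Sq i j N := by
  unfold Sq
  rw [← Finset.sum_subset (Finset.range_subset_range.mpr hM)]
  intro k hk hk'
  rw [qb_eq_zero (show i + 2 ≤ k by simp [Finset.mem_range] at *; omega), zero_mul]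

lemma Sq_gram (i j N : ℕ) (hN : i + 2 ≤ N) : Sq i j N = (catalan (i + j + 2) : ℤ) := by
  have h1 : Sq i j (N + (i + j + 3)) = Sq i j N := Sq_stable i j N _ hN (by omega)
  have h2 : Sq i j (N + (i + j 
+ 3)) = Sq i j (i + j + 3) := Sq_stable i j (i + j + 3) _ (by omega) (by omega)
  rw [← h1, h2, Sq_diag i j]

lemma sum_delta (N b : ℕ) (hb : b < N) (f : ℕ → ℤ) :
    ∑ m ∈ Finset.range N, (if m = b then f m else 0) = f b := by
  rw [Finset.sum_eq_single b (fun m _ hm => if_neg hm)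
    (fun h => absurd (Finset.mem_range.mpr hb) h), if_pos rfl]

def Lf (a m : ℕ) : ℤ := (if m = a then 1 else 0) + (if m + 1 = a then 1 else 0)

def Mf (a b : ℕ) : ℤ :=
  (if a = b then 1 else 0) + (if a + 1 = b then 1 else 0) + (if b + 1 = a then 1 else 0)
    + (if a = b ∧ 1 ≤ a then 1 else 0)

def Kf (a b : ℕ) : ℤ := if a = 0 then (if b = 0 then 1 else 0) else qb (a - 1) b

lemma LL_s2 (n a b : ℕ) (ha : a ≤ n) (hb : b ≤ n) :
    ∑ m ∈ Finset.range (n + 1), Lf a m * Lf b m = Mf a b := by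
  have expand : ∀ m, Lf a m * Lf b m =
      (if m = a then (if a = b then (1:ℤ) else 0) else 0)
    + (if m = a then (if a + 1 = b then (1:ℤ) else 0) else 0)
    + (if m = b then (if b + 1 = a then (1:ℤ) else 0) else 0)
    + (if m = a - 1 then (if a = b ∧ 1 ≤ a then (1:ℤ) else 0) else 0) := by
    intro m
    unfold Lf
    split_ifs <;> norm_num <;> omega
  rw [Finset.sum_congr rfl fun m _ => expand m]
  simp only [Finset.sum_add_distrib]
  rw [sum_delta (n + 1) a (by omega) (fun _ => if a = b then (1:ℤ) else 0),
    sum_delta (n + 1) a (by omega) (fun _ => if a + 1 = b then (1:ℤ) else 0),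
    sum_delta (n + 1) b (by omega) (fun _ => if b + 1 = a then (1:ℤ) else 0),
    sum_delta (n + 1) (a - 1) (by omega) (fun _ => if a = b ∧ 1 ≤ a then (1:ℤ) else 0)]
  rfl

lemma Mf_zero (j : ℕ) : Mf 0 j = qb 0 j := by
  rcases j with _ | _ | j
  · rw [qb_zero_zero]; norm_num [Mf]
  · rw [qb_zero_one]; norm_num [Mf]
  · rw [qb_eq_zero (show 0 + 2 ≤ j + 2 by omega)]; norm_num [Mf]

lemma KM (n i j : ℕ) (hi : i ≤ n) (hj : j ≤ n) :
    ∑ l ∈ Finset.range (n + 1), Kf i l * Mf l j = qb i j := by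
  rcases i with _ | i
  · have expand : ∀ l, Kf 0 l * Mf l j = if l = 0 then Mf 0 j else 0 := by
      intro l
      show (if (0:ℕ) = 0 then (if l = 0 then (1:ℤ) else 0) else qb (0-1) l) * Mf l j = _
      rw [if_pos rfl]
      by_cases h : l = 0
      · subst h; rw [if_pos rfl, if_pos rfl, one_mul]
      · rw [if_neg h, if_neg h, zero_mul]
    rw [Finset.sum_congr rfl fun l _ => expand l, sum_delta (n + 1) 0 (by omega), Mf_zero]
  · have hK : ∀ l, Kf (i + 1) l = qb i l := by
      intro l; unfold Kf; simp
    have hext : ∑ l ∈ Finset.range (n + 2), Kf (i + 1) l * Mf l j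
        = ∑ l ∈ Finset.range (n + 1), Kf (i + 1) l * Mf l j := by
      rw [Finset.sum_range_succ, hK, qb_eq_zero (show i + 2 ≤ n + 1 by omega), zero_mul, add_zero]
    rw [← hext]
    have expand : ∀ l, Kf (i + 1) l * Mf l j =
        (if l = j then qb i j else 0)
      + (if l = j - 1 then (if 1 ≤ j then qb i (j - 1) else 0) else 0)
      + (if l = j + 1 then qb i (j + 1) else 0)
      + (if l = j then (if 1 ≤ j then qb i j else 0) else 0) := by
      intro l
      rw [hK]
      unfold Mf
      split_ifs <;> (try (exfalso; omega)) <;> (try subst_eqs) <;> (try ring1) <;> (ring_nf; congr 1 <;> omega)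
    rw [Finset.sum_congr rfl fun l _ => expand l]
    simp only [Finset.sum_add_distrib]
    rw [sum_delta (n + 2) j (by omega) (fun _ => qb i j),
      sum_delta (n + 2) (j - 1) (by omega) (fun _ => if 1 ≤ j then qb i (j - 1) else 0),
      sum_delta (n + 2) (j + 1) (by omega) (fun _ => qb i (j + 1)),
      sum_delta (n + 2) j (by omega) (fun _ => if 1 ≤ j then qb i j else 0)]
    rcases j with _ | j
    · norm_num [qb_rec_zero]
    · rw [qb_rec_succ]
      norm_num
      ring

lemma det_Bt (n : ℕ) : (Matrix.of fun i k : Fin (n + 1) => qb i.1 k.1).det = 1 := by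
  set Kt : Matrix (Fin (n + 1)) (Fin (n + 1)) ℤ := Matrix.of fun i k => Kf i.1 k.1 with hKt
  set Lt : Matrix (Fin (n + 1)) (Fin (n + 1)) ℤ := Matrix.of fun a m => Lf a.1 m.1 with hLt
  set Mt : Matrix (Fin (n + 1)) (Fin (n + 1)) ℤ := Matrix.of fun a b => Mf a.1 b.1 with hMt
  have hM : Mt = Lt * Lt.transpose := by
    ext a b
    simp only [hMt, hLt, Matrix.mul_apply, Matrix.transpose_apply, Matrix.of_apply]
    rw [Fin.sum_univ_eq_sum_range (fun m => Lf a.1 m * Lf b.1 m) (n + 1)]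
    exact (LL_s2 n a.1 b.1 (Nat.lt_succ_iff.mp a.2) (Nat.lt_succ_iff.mp b.2)).symm
  have hB : (Matrix.of fun i k : Fin (n + 1) => qb i.1 k.1) = Kt * Mt := by
    ext i j
    simp only [hKt, hMt, Matrix.mul_apply, Matrix.of_apply]
    rw [Fin.sum_univ_eq_sum_range (fun l => Kf i.1 l * Mf l j.1) (n + 1)]
    exact (KM n i.1 j.1 (Nat.lt_succ_iff.mp i.2) (Nat.lt_succ_iff.mp j.2)).symm
  have hdetK : Kt.det = 1 := by
    rw [Matrix.det_of_lowerTriangular Kt (fun i j hlt => ?_)]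
    · apply Finset.prod_eq_one
      intro a _
      simp only [hKt, Matrix.of_apply]
      rcases Nat.eq_zero_or_pos a.1 with h0 | hpos
      · simp [Kf, h0]
      · unfold Kf
        rw [if_neg (by omega)]
        have : a.1 - 1 + 1 = a.1 := by omega
        rw [← this] at *
        exact qb_top (a.1 - 1)
    · have hij : i.1 < j.1 := hlt
      simp only [hKt, Matrix.of_apply]
      unfold Kf
      split_ifs with h h2
      · omega
      · rfl
      · apply qb_eq_zero
        omega
  have hdetL : Lt.det = 1 := by
    rw [Matrix.det_of_lowerTriangular Lt (fun i j hlt => ?_)]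
    · apply Finset.prod_eq_one
      intro a _
      simp only [hLt, Matrix.of_apply]
      unfold Lf
      rw [if_pos rfl, if_neg (by omega)]
      norm_num
    · have hij : i.1 < j.1 := hlt
      simp only [hLt, Matrix.of_apply]
      unfold Lf
      rw [if_neg (by omega), if_neg (by omega)]
      norm_num
  rw [hB, hM, Matrix.det_mul, Matrix.det_mul, Matrix.det_transpose, hdetK, hdetL]
  norm_num

theorem catalan_hankel_aux :
    ∀ N : ℕ, (Matrix.of fun i j : Fin N => (catalan (i.1 + j.1 + 2) : ℤ)).det = N + 1 := by
  intro N
  induction N with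
  | zero => simp [Matrix.det_fin_zero]
  | succ n ih =>
    set Bt : Matrix (Fin (n + 1)) (Fin (n + 1)) ℤ := Matrix.of fun i k => qb i.1 k.1 with hBt
    set A : Matrix (Fin (n + 1)) (Fin (n + 1)) ℤ := Bt * Bt.transpose with hA
    have hAentry : ∀ i j : Fin (n + 1), A i j = Sq i.1 j.1 (n + 1) := by
      intro i j
      simp only [hA, hBt, Matrix.mul_apply, Matrix.transpose_apply, Matrix.of_apply]
      exact Fin.sum_univ_eq_sum_range (fun k => qb i.1 k * qb j.1 k) (n + 1)
    have hsingle : ∀ i : Fin (n + 1), qb i.1 (n + 1) = if i = Fin.last n then 1 else 0 := by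
      intro i
      by_cases h : i = Fin.last n
      · subst h
        rw [if_pos rfl]
        exact qb_top n
      · rw [if_neg h]
        have : i.1 < n := lt_of_le_of_ne (Nat.lt_succ_iff.mp i.2) fun hh => h (Fin.ext hh)
        exact qb_eq_zero (by omega)
    have hH : (Matrix.of fun i j : Fin (n + 1) => (catalan (i.1 + j.1 + 2) : ℤ))
        = A.updateRow (Fin.last n) (A (Fin.last n) + Pi.single (Fin.last n) 1) := by
      ext i j
      rw [Matrix.updateRow_apply]
      have hg : ((catalan (i.1 + j.1 + 2) : ℤ))
          = Sq i.1 j.1 (n + 1) + qb i.1 (n + 1) * qb j.1 (n + 1) := by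
        rw [← Sq_gram i.1 j.1 (n + 2) (by omega)]
        unfold Sq
        rw [Finset.sum_range_succ]
      by_cases h : i = Fin.last n
      · rw [if_pos h]
        subst h
        simp only [Matrix.of_apply, Pi.add_apply, Pi.single_apply]
        rw [hg, hAentry, hsingle (Fin.last n), if_pos rfl, hsingle j, one_mul]
      · rw [if_neg h]
        simp only [Matrix.of_apply]
        rw [hg, hAentry, hsingle i, if_neg h, zero_mul, add_zero]
    rw [hH, Matrix.det_updateRow_add, Matrix.updateRow_eq_self]
    have hdetA : A.det = 1 := by
      rw [hA, Matrix.det_mul, Matrix.det_transpose, det_Bt n]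
      norm_num
    have hE : (A.updateRow (Fin.last n) (Pi.single (Fin.last n) 1)).det = n + 1 := by
      rw [Matrix.det_succ_row _ (Fin.last n),
        Finset.sum_eq_single (Fin.last n) (fun b _ hb => by
          simp only [Matrix.updateRow_self, Pi.single_eq_of_ne hb, mul_zero, zero_mul])
        (fun h => absurd (Finset.mem_univ _) h)]
      have hsub : ((A.updateRow (Fin.last n) (Pi.single (Fin.last n) 1)).submatrix
          (Fin.last n).succAbove (Fin.last n).succAbove)
          = Matrix.of fun i j : Fin n => (catalan (i.1 + j.1 + 2) : ℤ) := by
        ext i j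
        simp only [Matrix.submatrix_apply, Matrix.of_apply, Fin.succAbove_last]
        rw [Matrix.updateRow_apply, if_neg (Fin.castSucc_lt_last i).ne, hAentry]
        exact Sq_gram i.1 j.1 (n + 1) (by omega)
      rw [hsub, ih, Matrix.updateRow_self, Pi.single_eq_same]
      have heven : ((-1 : ℤ)) ^ ((Fin.last n).1 + (Fin.last n).1) = 1 :=
        Even.neg_one_pow ⟨(Fin.last n).1, rfl⟩
      rw [heven]
      ring
    rw [hdetA, hE]
    push_cast
    ring

theorem catalan_hankel_det_two (n : ℕ) (hn : 0 < n) :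
    Matrix.det (Matrix.of fun i j : Fin n => (catalan (i.1 + j.1 + 2) : ℤ)) = n + 1 :=
  catalan_hankel_aux n
end

section
/- Let n be a positive integer and α_0, α_1, ..., α_{n-1} non-negative integers. Then det_{0≤i,j≤n-1}(C_{α_i + j}) = ∏_{0≤i<j≤n-1}(α_j − α_i) · ∏_{i=0}^{n-1} ((i+n)! · (2α_i)!) / ((2i)! · α_i! · (α_i+n)!), where C_m denotes the m-th Catalan number. (The identity is an equality of rational numbers.) -/
open Polynomial Finset Nat

-- (a+m)! = (a+l)! * ∏_{k=l+1}^{m} (a+k)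
lemma gv_fact_split (a : ℕ) {l m : ℕ} (h : l ≤ m) :
    (a + m)! = (a + l)! * ∏ k ∈ Ico (l + 1) (m + 1), (a + k) := by
  induction m, h using Nat.le_induction with
  | base => simp
  | succ m hm ih =>
      rw [Finset.prod_Ico_succ_top (by omega), ← mul_assoc, ← ih]
      rw [show a + (m+1) = (a+m) + 1 by ring, Nat.factorial_succ]
      ring

lemma gv_L2 : ∀ i : ℕ, (2 * i + 1)! = 2 ^ i * i ! * ∏ k ∈ range i, (2 * k + 3)
  | 0 => rfl
  | (i+1) => by
      rw [Finset.prod_range_succ, show 2*(i+1)+1 = (2*i+2)+1 by ring, Nat.factorial_succ,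
        show 2*i+2 = (2*i+1)+1 by ring, Nat.factorial_succ, gv_L2 i, Nat.factorial_succ,
        pow_succ]
      ring

lemma gv_L3 : ∀ n : ℕ, ∏ m ∈ range (2 * n), m ! =
    (∏ i ∈ range n, (2 * i)!) * ∏ i ∈ range n, (2 * i + 1)!
  | 0 => rfl
  | (n+1) => by
      rw [show 2*(n+1) = (2*n)+1+1 by ring, Finset.prod_range_succ, Finset.prod_range_succ,
        gv_L3 n, Finset.prod_range_succ, Finset.prod_range_succ]
      ring

lemma gv_L1 (n a : ℕ) : ∀ j, j < n →
    a ! * (a + n)! * (2 * (a + j))! =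
      (2 * a)! * 2 ^ j * (∏ k ∈ range j, (2 * a + 2 * k + 1)) *
        (∏ k ∈ Ico (j + 2) (n + 1), (a + k)) * (a + j)! * (a + j + 1)!
  | 0, h0 => by
      have := gv_fact_split a (l := 1) (m := n) h0
      simp only [Finset.prod_range_zero, pow_zero, Nat.add_zero, this]
      rw [show a + 1 = a + 0 + 1 by ring, Nat.factorial_succ]
      ring
  | (j+1), hj => by
      have ih := gv_L1 n a j (by omega)
      have hsplit : (∏ k ∈ Ico (j + 2) (n + 1), (a + k)) =
          (a + (j + 2)) * ∏ k ∈ Ico (j + 3) (n + 1), (a + k) :=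
        Finset.prod_eq_prod_Ico_succ_bot (by omega) _
      rw [hsplit] at ih
      have e1 : (2 * (a + (j+1)))! = (2*(a+j)+2) * ((2*(a+j)+1) * (2 * (a + j))!) := by
        rw [show 2*(a+(j+1)) = (2*(a+j)+1)+1 by ring, Nat.factorial_succ,
          show 2*(a+j)+1 = (2*(a+j))+1 by ring, Nat.factorial_succ]
      calc a ! * (a + n)! * (2 * (a + (j+1)))!
          = ((2*(a+j)+2) * (2*(a+j)+1)) * (a ! * (a + n)! * (2*(a+j))!) := by rw [e1]; ring
        _ = ((2*(a+j)+2) * (2*(a+j)+1)) * ((2 * a)! * 2 ^ j *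
              (∏ k ∈ range j, (2 * a + 2 * k + 1)) *
              ((a + (j + 2)) * ∏ k ∈ Ico (j + 3) (n + 1), (a + k)) * (a + j)! * (a + j + 1)!) := by
            rw [ih]
        _ = (2 * a)! * 2 ^ (j+1) * (∏ k ∈ range (j+1), (2 * a + 2 * k + 1)) *
              (∏ k ∈ Ico (j + 1 + 2) (n + 1), (a + k)) * (a + (j+1))! * (a + (j+1) + 1)! := by
            rw [Finset.prod_range_succ, pow_succ,
              show a+(j+1) = (a+j)+1 by ring, Nat.factorial_succ,
              show (a+j)+1+1 = ((a+j)+1)+1 by ring, Nat.factorial_succ,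
              show j+1+2 = j+3 by ring, Nat.factorial_succ]
            ring

lemma gv_cat_fact (m : ℕ) : catalan m * ((m + 1)! * m !) = (2 * m)! := by
  have h1 := succ_mul_catalan_eq_centralBinom m
  have h2 := Nat.choose_mul_factorial_mul_factorial (show m ≤ 2 * m by omega)
  rw [show 2 * m - m = m by omega] at h2
  calc catalan m * ((m + 1)! * m !) = ((m+1) * catalan m) * (m ! * m !) := by
        rw [Nat.factorial_succ]; ring
    _ = m.centralBinom * (m ! * m !) := by rw [h1]
    _ = (2*m).choose m * (m ! * m !) := by rw [Nat.centralBinom]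
    _ = (2*m)! := by rw [← h2]; ring

open Polynomial Finset Nat

noncomputable def gvP (n j : ℕ) : ℚ[X] :=
  C ((2:ℚ) ^ j) * (∏ k ∈ range j, (C 2 * X + C ((2 * k + 1 : ℕ) : ℚ))) *
    ∏ k ∈ Ico (j + 2) (n + 1), (X + C ((k : ℕ) : ℚ))

lemma gv_natDegree_lt {n j : ℕ} (hj : j < n) : (gvP n j).natDegree < n := by
  have h1 : (∏ k ∈ range j, (C (2:ℚ) * X + C ((2 * k + 1 : ℕ) : ℚ))).natDegree ≤ j := by
    refine (Polynomial.natDegree_prod_le _ _).trans ?_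
    have : ∀ k ∈ range j, (C (2:ℚ) * X + C ((2 * k + 1 : ℕ) : ℚ)).natDegree = 1 :=
      fun k _ => Polynomial.natDegree_linear two_ne_zero
    rw [Finset.sum_congr rfl this]
    simp
  have h2 : (∏ k ∈ Ico (j + 2) (n + 1), (X + C ((k : ℕ) : ℚ))).natDegree ≤ n - 1 - j := by
    refine (Polynomial.natDegree_prod_le _ _).trans ?_
    have : ∀ k ∈ Ico (j+2) (n+1), (X + C ((k : ℕ) : ℚ)).natDegree = 1 :=
      fun k _ => Polynomial.natDegree_X_add_C _
    rw [Finset.sum_congr rfl this]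
    simp only [Finset.sum_const, Nat.card_Ico, smul_eq_mul, mul_one]
    omega
  calc (gvP n j).natDegree ≤ (C ((2:ℚ) ^ j) * (∏ k ∈ range j, (C 2 * X + C ((2 * k + 1 : ℕ) : ℚ)))).natDegree
        + (∏ k ∈ Ico (j + 2) (n + 1), (X + C ((k : ℕ) : ℚ))).natDegree :=
      Polynomial.natDegree_mul_le
    _ ≤ ((C ((2:ℚ) ^ j)).natDegree + (∏ k ∈ range j, (C (2:ℚ) * X + C ((2 * k + 1 : ℕ) : ℚ))).natDegree)
        + (n - 1 - j) := by
        exact Nat.add_le_add Polynomial.natDegree_mul_le h2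
    _ < n := by
        simp only [Polynomial.natDegree_C, Nat.zero_add]
        omega

lemma gv_eval_nat (n j a : ℕ) :
    (gvP n j).eval (a : ℚ) =
      ((2 ^ j * (∏ k ∈ range j, (2 * a + 2 * k + 1)) *
        ∏ k ∈ Ico (j + 2) (n + 1), (a + k) : ℕ) : ℚ) := by
  simp only [gvP, eval_mul, eval_C, eval_prod, eval_add, eval_mul, eval_X]
  push_cast
  congr 1
  · congr 1
    exact Finset.prod_congr rfl fun k _ => by push_cast; ring

-- scalar identity : catalan (a+j) * (a! (a+n)!) = (2a)! * eval a (gvP n j)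
lemma gv_cat_eval {n j : ℕ} (a : ℕ) (hj : j < n) :
    (catalan (a + j) : ℚ) * ((a ! : ℚ) * ((a + n)! : ℚ)) =
      ((2 * a)! : ℚ) * (gvP n j).eval (a : ℚ) := by
  have key := gv_L1 n a j hj
  have hcf := gv_cat_fact (a + j)
  have hne : ((a + j)! : ℚ) * ((a + j + 1)! : ℚ) ≠ 0 := by
    positivity
  apply mul_right_cancel₀ hne
  have keyQ := congrArg (fun t : ℕ => (t : ℚ)) key
  have hcfQ := congrArg (fun t : ℕ => (t : ℚ)) hcf
  push_cast at keyQ hcfQ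
  rw [gv_eval_nat]
  push_cast
  linear_combination ((a ! : ℚ) * ((a + n)! : ℚ)) * hcfQ + keyQ

-- the diagonal entries at the evaluation points  -(i+1)
lemma gv_eval_neg {n i : ℕ} (hi : i < n) :
    (gvP n i).eval (-(i + 1 : ℚ)) * (i ! : ℚ) =
      (-1) ^ i * ((2 * i + 1)! : ℚ) * (((n - 1 - i)! : ℕ) : ℚ) := by
  have h1 : (∏ k ∈ range i, (C (2:ℚ) * X + C ((2 * k + 1 : ℕ) : ℚ))).eval (-(i+1:ℚ)) =
      (-1) ^ i * ((∏ k ∈ range i, (2 * k + 3) : ℕ) : ℚ) := by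
    rw [eval_prod]
    have : ∀ k ∈ range i, (C (2:ℚ) * X + C ((2 * k + 1 : ℕ) : ℚ)).eval (-(i+1:ℚ)) =
        (-1) * ((2 * (i - 1 - k) + 3 : ℕ) : ℚ) := by
      intro k hk
      rw [Finset.mem_range] at hk
      simp only [eval_add, eval_mul, eval_C, eval_X]
      have : ((i - 1 - k : ℕ) : ℚ) = (i : ℚ) - 1 - k := by
        push_cast [Nat.cast_sub (by omega : k ≤ i - 1), Nat.cast_sub (by omega : 1 ≤ i)]
        ring
      push_cast [this]
      ring
    rw [Finset.prod_congr rfl this, Finset.prod_mul_distrib]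
    simp only [Finset.prod_const_one, Finset.prod_const, Finset.card_range]
    rw [← Finset.prod_range_reflect (fun k => (2 * k + 3 : ℕ)) i]
    push_cast
    ring
  have h2 : (∏ k ∈ Ico (i + 2) (n + 1), (X + C ((k : ℕ) : ℚ))).eval (-(i+1:ℚ)) =
      (((n - 1 - i)! : ℕ) : ℚ) := by
    rw [eval_prod]
    have : ∀ k ∈ Ico (i+2) (n+1), (X + C ((k : ℕ) : ℚ)).eval (-(i+1:ℚ)) =
        ((k - (i + 1) : ℕ) : ℚ) := by
      intro k hk
      rw [Finset.mem_Ico] at hk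
      simp only [eval_add, eval_X, eval_C]
      rw [Nat.cast_sub (by omega)]
      push_cast
      ring
    rw [Finset.prod_congr rfl this, ← Nat.cast_prod]
    congr 1
    rw [Finset.prod_Ico_eq_prod_range]
    have : ∀ k ∈ range (n + 1 - (i + 2)), (i + 2 + k - (i + 1)) = k + 1 := by
      intro k _; omega
    rw [Finset.prod_congr rfl this, show n + 1 - (i + 2) = n - 1 - i by omega]
    exact Finset.prod_range_add_one_eq_factorial _
  have e : (gvP n i).eval (-(i+1:ℚ)) = ((2:ℚ)^i) * ((-1) ^ i * ((∏ k ∈ range i, (2 * k + 3) : ℕ) : ℚ)) * (((n - 1 - i)! : ℕ) : ℚ) := by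
    simp only [gvP, eval_mul, eval_C, h1, h2]
  rw [e]
  have hL2 := gv_L2 i
  have : ((2 * i + 1)! : ℚ) = 2 ^ i * (i ! : ℚ) * ((∏ k ∈ range i, (2 * k + 3) : ℕ) : ℚ) := by
    rw [hL2]; push_cast; ring
  rw [this]
  ring

lemma gv_prod_fact (n : ℕ) :
    (∏ i ∈ range n, (i + n)!) * ∏ i ∈ range n, i ! =
      (∏ i ∈ range n, (2 * i)!) * ∏ i ∈ range n, (2 * i + 1)! := by
  rw [← gv_L3]
  rw [show 2 * n = n + n by ring, Finset.prod_range_add]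
  rw [Finset.prod_congr rfl (fun x _ => show (n + x)! = (x + n)! by rw [Nat.add_comm])]
  ring

lemma gv_conv {n : ℕ} (f : ℕ → ℕ → ℚ) :
    ∏ i : Fin n, ∏ j ∈ Ioi i, f i.1 j.1 = ∏ i ∈ range n, ∏ j ∈ Ico (i + 1) n, f i j := by
  rw [← Fin.prod_univ_eq_prod_range (fun i => ∏ j ∈ Ico (i + 1) n, f i j) n]
  refine Finset.prod_congr rfl fun i _ => ?_
  have hmap : (Ioi i).map Fin.valEmbedding = Ico (i.1 + 1) n := by
    ext x
    simp only [Finset.mem_map, Finset.mem_Ioi, Finset.mem_Ico, Fin.valEmbedding_apply]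
    constructor
    · rintro ⟨j, hj, rfl⟩
      exact ⟨hj, j.2⟩
    · rintro ⟨h1, h2⟩
      exact ⟨⟨x, h2⟩, by simpa [Fin.lt_def] using h1, rfl⟩
  rw [← hmap, Finset.prod_map]
  rfl

lemma gv_key (n : ℕ) :
    (∏ i ∈ range n, ∏ j ∈ Ico (i + 1) n, (-((j : ℚ) + 1) - -((i : ℚ) + 1))) *
      ∏ i ∈ range n, ((i + n)! : ℚ) / ((2 * i)! : ℚ)
    = ∏ i ∈ range n, (gvP n i).eval (-((i : ℚ) + 1)) := by
  have hRHS : ∀ i ∈ range n, (gvP n i).eval (-((i : ℚ) + 1)) =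
      (-1) ^ i * ((2 * i + 1)! : ℚ) * (((n - 1 - i)! : ℕ) : ℚ) / (i ! : ℚ) := by
    intro i hi
    rw [eq_div_iff (by positivity : ((i ! : ℕ) : ℚ) ≠ 0)]
    exact gv_eval_neg (mem_range.mp hi)
  have hLHS : ∀ i ∈ range n, (∏ j ∈ Ico (i + 1) n, (-((j : ℚ) + 1) - -((i : ℚ) + 1))) =
      (-1) ^ (n - 1 - i) * (((n - 1 - i)! : ℕ) : ℚ) := by
    intro i hi
    rw [mem_range] at hi
    have h1 : ∀ j ∈ Ico (i + 1) n, (-((j : ℚ) + 1) - -((i : ℚ) + 1)) =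
        (-1) * ((j - i : ℕ) : ℚ) := by
      intro j hj
      rw [mem_Ico] at hj
      rw [Nat.cast_sub (by omega)]
      ring
    rw [Finset.prod_congr rfl h1, Finset.prod_mul_distrib, Finset.prod_const, Nat.card_Ico,
      ← Nat.cast_prod]
    congr 2
    · omega
    · rw [Finset.prod_Ico_eq_prod_range]
      rw [Finset.prod_congr rfl (fun k _ => show i + 1 + k - i = k + 1 by omega),
        show n - (i + 1) = n - 1 - i by omega]
      exact Finset.prod_range_add_one_eq_factorial _
  rw [Finset.prod_congr rfl hLHS, Finset.prod_congr rfl hRHS]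
  rw [Finset.prod_mul_distrib, Finset.prod_div_distrib, Finset.prod_div_distrib,
    Finset.prod_mul_distrib, Finset.prod_mul_distrib]
  rw [show (∏ i ∈ range n, (-1 : ℚ) ^ (n - 1 - i)) = ∏ i ∈ range n, (-1 : ℚ) ^ i from
    Finset.prod_range_reflect (fun i => (-1 : ℚ) ^ i) n]
  have hq := congrArg (fun t : ℕ => (t : ℚ)) (gv_prod_fact n)
  push_cast at hq
  have h2 : (∏ i ∈ range n, ((2 * i)! : ℚ)) ≠ 0 := by positivity
  have h3 : (∏ i ∈ range n, (i ! : ℚ)) ≠ 0 := by positivity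
  field_simp
  linear_combination hq

theorem gessel_viennot_catalan_det (n : ℕ) (hn : 0 < n) (α : ℕ → ℕ) :
    Matrix.det (Matrix.of fun i j : Fin n => (catalan (α i.1 + j.1) : ℚ)) =
    (∏ i ∈ Finset.range n, ∏ j ∈ Finset.Ico (i + 1) n, ((α j : ℚ) - (α i : ℚ))) *
    ∏ i ∈ Finset.range n,
      ((Nat.factorial (i + n) : ℚ) * (Nat.factorial (2 * α i) : ℚ)) /
        ((Nat.factorial (2 * i) : ℚ) * (Nat.factorial (α i) : ℚ) *
          (Nat.factorial (α i + n) : ℚ)) := by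
  classical
  set B : Matrix (Fin n) (Fin n) ℚ := Matrix.of (fun k j : Fin n => (gvP n j.1).coeff k.1)
    with hB
  -- factorization through the Vandermonde matrix
  have hfact : ∀ x : Fin n → ℚ,
      (Matrix.of fun i j : Fin n => (gvP n j.1).eval (x i)) = Matrix.vandermonde x * B := by
    intro x
    ext i j
    rw [Matrix.mul_apply, Matrix.of_apply,
      Polynomial.eval_eq_sum_range' (gv_natDegree_lt j.2) (x i),
      ← Fin.sum_univ_eq_sum_range (fun k => (gvP n j.1).coeff k * x i ^ k) n]
    exact Finset.sum_congr rfl fun k _ => by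
      rw [Matrix.vandermonde_apply, hB, mul_comm]
      rfl
  -- the catalan matrix factors
  have hMeq : (Matrix.of fun i j : Fin n => (catalan (α i.1 + j.1) : ℚ)) =
      Matrix.diagonal
          (fun i : Fin n => ((2 * α i.1)! : ℚ) / (((α i.1)! : ℚ) * ((α i.1 + n)! : ℚ))) *
        (Matrix.vandermonde (fun i : Fin n => (α i.1 : ℚ)) * B) := by
    rw [← hfact fun i : Fin n => (α i.1 : ℚ)]
    ext i j
    rw [Matrix.diagonal_mul, Matrix.of_apply, Matrix.of_apply]
    have h := gv_cat_eval (n := n) (α i.1) j.2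
    have hne : ((α i.1)! : ℚ) * ((α i.1 + n)! : ℚ) ≠ 0 := by positivity
    rw [div_mul_eq_mul_div, eq_div_iff hne]
    linear_combination h
  -- evaluation points making the polynomial matrix triangular
  set w : Fin n → ℚ := fun i => -((i.1 : ℚ) + 1) with hw
  have htri : (Matrix.of fun i j : Fin n => (gvP n j.1).eval (w i)).BlockTriangular id := by
    intro i j hji
    simp only [Matrix.of_apply, gvP, eval_mul]
    apply mul_eq_zero_of_right
    rw [eval_prod]
    refine Finset.prod_eq_zero (i := i.1 + 1) ?_ ?_
    · rw [Finset.mem_Ico]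
      have := i.2
      have : j.1 < i.1 := hji
      omega
    · simp [hw]
  have hdetw : (Matrix.vandermonde w).det * B.det = ∏ i : Fin n, (gvP n i.1).eval (w i) := by
    rw [← Matrix.det_mul, ← hfact w, Matrix.det_of_upperTriangular htri]
    rfl
  have hvne : (Matrix.vandermonde w).det ≠ 0 := by
    rw [Matrix.det_vandermonde_ne_zero_iff]
    intro i j hij
    simp only [hw, neg_inj, add_left_inj, Nat.cast_inj] at hij
    exact Fin.ext hij
  have hdetB : B.det = ∏ i ∈ range n, ((i + n)! : ℚ) / ((2 * i)! : ℚ) := by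
    apply mul_left_cancel₀ hvne
    rw [hdetw, Matrix.det_vandermonde,
      gv_conv (fun i j => -((j : ℚ) + 1) - -((i : ℚ) + 1))]
    simp only [hw]
    rw [Fin.prod_univ_eq_prod_range (fun i => (gvP n i).eval (-((i : ℚ) + 1))) n]
    exact (gv_key n).symm
  rw [hMeq, Matrix.det_mul, Matrix.det_mul, Matrix.det_diagonal, Matrix.det_vandermonde,
    hdetB, gv_conv (fun i j => ((α j : ℚ) - (α i : ℚ))),
    Fin.prod_univ_eq_prod_range
      (fun i => ((2 * α i)! : ℚ) / (((α i)! : ℚ) * ((α i + n)! : ℚ))) n]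
  rw [← mul_assoc, mul_comm (∏ i ∈ range n, ((2 * α i)! : ℚ) / (((α i)! : ℚ) * ((α i + n)! : ℚ)))
      (∏ i ∈ range n, ∏ j ∈ Ico (i + 1) n, ((α j : ℚ) - (α i : ℚ))), mul_assoc,
    ← Finset.prod_mul_distrib]
  congr 1
  refine Finset.prod_congr rfl fun i _ => ?_
  have h1 : ((2 * i)! : ℚ) ≠ 0 := by positivity
  have h2 : ((α i)! : ℚ) ≠ 0 := by positivity
  have h3 : ((α i + n)! : ℚ) ≠ 0 := by positivity
  have h4 : ((i + n)! : ℚ) ≠ 0 := by positivity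
  field_simp
end

section
/- For a positive integer n and non-negative integers α_0, ..., α_{n-1}, and any non-negative integer A with A ≥ α_i for all i, det_{0≤i,j≤n-1}(binom(A, α_i + j)) = (∏_{0≤i<j≤n-1}(α_i − α_j) / ∏_{i=0}^{n-1}(α_i + n − 1)!) · (∏_{i=0}^{n-1}(A+i)! / ∏_{i=0}^{n-1}(A − α_i)!), as an identity of rational numbers. -/
open Finset

noncomputable def gp (A : ℚ) (n m j : ℕ) (x : ℚ) : ℚ :=
  (∏ k ∈ Finset.Ico (j + m + 1) n, (x + k)) * ∏ k ∈ Finset.range j, (A - x - k)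

lemma gstep (A x : ℚ) (n m j : ℕ) (h : j < n - 1 - m) :
    gp A n m j x + gp A n m (j + 1) x = (A + (m + 1)) * gp A n (m + 1) j x := by
  have h1 : j + m + 1 < n := by omega
  unfold gp
  rw [Finset.prod_eq_prod_Ico_succ_bot h1, Finset.prod_range_succ]
  have : j + 1 + m + 1 = j + (m + 1) + 1 := by omega
  rw [this]
  push_cast
  ring_nf

lemma gtail (A x : ℚ) (n m j : ℕ) (h : n - 1 - m ≤ j) :
    gp A n m j x = gp A n (m + 1) j x := by
  unfold gp
  rcases Nat.lt_or_ge (j + m + 1) n with h1 | h1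
  · omega
  · rw [Finset.Ico_eq_empty (by omega), Finset.Ico_eq_empty (by omega)]

lemma prod_ite_lt (c : ℚ) (t n : ℕ) (h : t ≤ n) :
    ∏ j ∈ range n, (if j < t then c else 1) = c ^ t := by
  rw [range_eq_Ico, ← Finset.prod_Ico_consecutive _ (Nat.zero_le t) h]
  rw [Finset.prod_congr rfl (fun x hx => if_pos (mem_Ico.mp hx).2),
    Finset.prod_congr (rfl : Ico t n = Ico t n) (fun x hx => if_neg (by simpa using (mem_Ico.mp hx).1.not_gt)),
    Finset.prod_const, Finset.prod_const_one, ← range_eq_Ico, card_range, mul_one]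

lemma pass (n : ℕ) (x : Fin n → ℚ) (A : ℚ) (m : ℕ) :
    Matrix.det (Matrix.of fun i j : Fin n => gp A n m j.1 (x i)) =
      (A + (m + 1)) ^ (n - 1 - m) *
        Matrix.det (Matrix.of fun i j : Fin n => gp A n (m + 1) j.1 (x i)) := by
  set t := n - 1 - m with ht
  set M : Matrix (Fin n) (Fin n) ℚ := Matrix.of fun i j : Fin n => gp A n m j.1 (x i) with hM
  set E : Matrix (Fin n) (Fin n) ℚ := Matrix.of fun k j : Fin n =>
    if k.1 = j.1 then 1 else if k.1 = j.1 + 1 ∧ j.1 < t then 1 else 0 with hE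
  have hEtri : E.BlockTriangular OrderDual.toDual := by
    intro k j hkj
    have hkj' : k < j := hkj
    simp only [hE, Matrix.of_apply]
    have : k.1 < j.1 := hkj'
    rw [if_neg (by omega), if_neg (by omega)]
  have hdetE : E.det = 1 := by
    rw [Matrix.det_of_lowerTriangular E hEtri]
    apply Finset.prod_eq_one
    intro k _
    simp [hE]
  have hME : M * E = Matrix.of fun i j : Fin n =>
      (if j.1 < t then (A + (m + 1)) else 1) * gp A n (m + 1) j.1 (x i) := by
    ext i j
    rw [Matrix.mul_apply]
    have hsplit : ∀ k : Fin n, M i k * E k j =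
        (if k = j then M i k else 0) + (if k.1 = j.1 + 1 ∧ j.1 < t then M i k else 0) := by
      intro k
      simp only [hE, Matrix.of_apply]
      by_cases h1 : k.1 = j.1
      · rw [if_pos h1, if_pos (Fin.ext h1), if_neg (by omega), add_zero, mul_one]
      · rw [if_neg h1, if_neg (fun h => h1 (Fin.ext_iff.mp h)), zero_add]
        by_cases h2 : k.1 = j.1 + 1 ∧ j.1 < t
        · rw [if_pos h2, if_pos h2, mul_one]
        · rw [if_neg h2, if_neg h2, mul_zero]
    rw [Finset.sum_congr rfl (fun k _ => hsplit k), Finset.sum_add_distrib]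
    rw [Finset.sum_ite_eq' Finset.univ j (fun k => M i k), if_pos (Finset.mem_univ j)]
    by_cases hj : j.1 < t
    · have hj1 : j.1 + 1 < n := by omega
      set j' : Fin n := ⟨j.1 + 1, hj1⟩ with hj'
      have hcond : ∀ k : Fin n, (k.1 = j.1 + 1 ∧ j.1 < t) ↔ k = j' := by
        intro k
        constructor
        · rintro ⟨h, -⟩; exact Fin.ext h
        · rintro rfl; exact ⟨rfl, hj⟩
      rw [Finset.sum_congr rfl (fun k _ => by rw [if_congr (hcond k) rfl rfl])]
      rw [Finset.sum_ite_eq' Finset.univ j' (fun k => M i k), if_pos (Finset.mem_univ j')]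
      simp only [hM, Matrix.of_apply]
      rw [if_pos hj]
      exact gstep A (x i) n m j.1 hj
    · rw [Finset.sum_eq_zero (fun k _ => if_neg (fun h => hj h.2)), add_zero]
      simp only [hM, Matrix.of_apply]
      rw [if_neg hj, one_mul]
      exact gtail A (x i) n m j.1 (by omega)
  have h1 : M.det = (M * E).det := by rw [Matrix.det_mul, hdetE, mul_one]
  rw [show Matrix.det (Matrix.of fun i j : Fin n => gp A n m j.1 (x i)) = M.det from rfl, h1, hME]
  rw [Matrix.det_mul_row (fun j : Fin n => if j.1 < t then (A + (m + 1)) else 1)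
    (fun i j : Fin n => gp A n (m + 1) j.1 (x i))]
  congr 1
  rw [Fin.prod_univ_eq_prod_range (fun j => if j < t then (A + (m + 1)) else 1)]
  exact prod_ite_lt _ _ _ (by omega)

lemma passes (n : ℕ) (x : Fin n → ℚ) (A : ℚ) (m : ℕ) :
    Matrix.det (Matrix.of fun i j : Fin n => gp A n 0 j.1 (x i)) =
      (∏ t ∈ range m, (A + (t + 1)) ^ (n - 1 - t)) *
        Matrix.det (Matrix.of fun i j : Fin n => gp A n m j.1 (x i)) := by
  induction m with
  | zero => simp
  | succ m ih =>
      rw [ih, pass n x A m, Finset.prod_range_succ]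
      ring

lemma detU (n : ℕ) (A : ℚ) (x : Fin n → ℚ) :
    Matrix.det (Matrix.of fun i j : Fin n => ∏ k ∈ range j.1, (A - x i - k)) =
      ∏ i : Fin n, ∏ j ∈ Finset.Ioi i, (x i - x j) := by
  set p : Fin n → Polynomial ℚ := fun j => ∏ k ∈ range j.1, (Polynomial.X - Polynomial.C (k : ℚ)) with hp
  have hmonic : ∀ j, (p j).Monic := fun j =>
    Polynomial.monic_prod_of_monic _ _ (fun k _ => Polynomial.monic_X_sub_C _)
  have hdeg : ∀ j : Fin n, (p j).natDegree = j.1 := by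
    intro j
    rw [hp, Polynomial.natDegree_prod_of_monic _ _ (fun k _ => Polynomial.monic_X_sub_C _)]
    simp only [Polynomial.natDegree_X_sub_C, Finset.sum_const, smul_eq_mul, mul_one,
      Finset.card_range]
  have heval : ∀ (i j : Fin n), (p j).eval (A - x i) = ∏ k ∈ range j.1, (A - x i - k) := by
    intro i j
    rw [hp, Polynomial.eval_prod]
    exact Finset.prod_congr rfl (fun k _ => by simp
    )
  have := (Matrix.det_eval_matrixOfPolynomials_eq_det_vandermonde (fun i : Fin n => A - x i) p hdeg hmonic).symm
  rw [show (Matrix.of fun i j : Fin n => ∏ k ∈ range j.1, (A - x i - k)) =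
      (Matrix.of fun i j : Fin n => (p j).eval (A - x i)) from by
    ext i j; exact (heval i j).symm, this, Matrix.det_vandermonde]
  apply Finset.prod_congr rfl
  intro i _
  apply Finset.prod_congr rfl
  intro j _
  ring


lemma fact_prod (b : ℕ) : ∀ m : ℕ, (b + m).factorial = b.factorial * ∏ k ∈ range m, (b + k + 1)
  | 0 => by simp
  | (m+1) => by
      rw [show b + (m+1) = (b+m) + 1 from rfl, Nat.factorial_succ, fact_prod b m,
        Finset.prod_range_succ]
      ring

lemma entry_nat (A a n j : ℕ) (ha : a + j ≤ A) (hj : j < n) :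
    A.choose (a + j) * (a + n - 1).factorial * (A - a).factorial =
      A.factorial * ((∏ k ∈ Ico (j + 1) n, (a + k)) * ∏ k ∈ range j, (A - a - k)) := by
  have h1 : (a + n - 1).factorial = (a + j).factorial * ∏ k ∈ Ico (j + 1) n, (a + k) := by
    rw [Finset.prod_Ico_eq_prod_range]
    have e1 : ∀ k ∈ range (n - (j+1)), a + (j + 1 + k) = (a + j) + k + 1 := by intros; omega
    rw [Finset.prod_congr rfl e1, ← fact_prod (a + j) (n - (j+1))]
    congr 1
    omega
  have h2 : (A - a).factorial = (A - a - j).factorial * ∏ k ∈ range j, (A - a - k) := by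
    have e2 : ∏ k ∈ range j, (A - a - k) = ∏ k ∈ range j, ((A - a - j) + (j - 1 - k) + 1) := by
      apply Finset.prod_congr rfl
      intro k hk
      rw [Finset.mem_range] at hk
      omega
    rw [e2, Finset.prod_range_reflect (fun k => (A - a - j) + k + 1) j,
      ← fact_prod (A - a - j) j]
    · congr 1
      omega
  have h3 : A.choose (a + j) * (a + j).factorial * (A - (a + j)).factorial = A.factorial :=
    Nat.choose_mul_factorial_mul_factorial ha
  have h4 : A - (a + j) = A - a - j := by omega
  rw [h1, h2, ← h3, h4]
  ring

lemma fact_key (A : ℕ) : ∀ n : ℕ, ∏ i ∈ range n, (A + i).factorial =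
    (A.factorial) ^ n * ∏ t ∈ range (n - 1), (A + t + 1) ^ (n - 1 - t)
  | 0 => by simp
  | (n+1) => by
      rw [Finset.prod_range_succ, fact_key A n, fact_prod A n]
      have h1 : ∏ t ∈ range n, (A + t + 1) ^ (n - t) =
          (∏ t ∈ range (n - 1), (A + t + 1) ^ (n - 1 - t)) * ∏ t ∈ range n, (A + t + 1) := by
        have e : ∀ t ∈ range n, (A + t + 1) ^ (n - t) = (A + t + 1) ^ (n - 1 - t) * (A + t + 1) := by
          intro t ht
          rw [Finset.mem_range] at ht
          rw [← pow_succ]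
          congr 1
          omega
        rw [Finset.prod_congr rfl e, Finset.prod_mul_distrib]
        congr 1
        cases n with
        | zero => simp
        | succ m =>
            rw [Finset.prod_range_succ]
            simp
      simp only [Nat.add_sub_cancel]
      rw [h1]
      ring

lemma entry_q (A a n j : ℕ) (ha : a ≤ A) (hj : j < n) :
    (A.choose (a + j) : ℚ) =
      (A.factorial : ℚ) / (((a + n - 1).factorial : ℚ) * ((A - a).factorial : ℚ)) *
        gp (A : ℚ) n 0 j (a : ℚ) := by
  have hne : (((a + n - 1).factorial : ℚ) * ((A - a).factorial : ℚ)) ≠ 0 :=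
    mul_ne_zero (Nat.cast_ne_zero.mpr (Nat.factorial_ne_zero _))
      (Nat.cast_ne_zero.mpr (Nat.factorial_ne_zero _))
  by_cases haj : a + j ≤ A
  · have hgp : gp (A : ℚ) n 0 j (a : ℚ) =
        (((∏ k ∈ Ico (j + 1) n, (a + k)) * ∏ k ∈ range j, (A - a - k) : ℕ) : ℚ) := by
      unfold gp
      rw [Nat.cast_mul, Nat.cast_prod, Nat.cast_prod]
      congr 1
      · exact Finset.prod_congr rfl (fun k _ => by push_cast; ring)
      · apply Finset.prod_congr rfl
        intro k hk
        rw [Finset.mem_range] at hk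
        rw [Nat.cast_sub (by omega : k ≤ A - a), Nat.cast_sub ha]
    rw [hgp, div_mul_eq_mul_div, eq_div_iff hne]
    have h := entry_nat A a n j haj hj
    have h' : ((A.choose (a + j) * (a + n - 1).factorial * (A - a).factorial : ℕ) : ℚ) =
        ((A.factorial * ((∏ k ∈ Ico (j + 1) n, (a + k)) * ∏ k ∈ range j, (A - a - k)) : ℕ) : ℚ) := by
      exact_mod_cast congrArg (Nat.cast : ℕ → ℚ) h
    push_cast at h'
    push_cast
    linarith [h']
  · rw [Nat.choose_eq_zero_of_lt (by omega), Nat.cast_zero]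
    have : gp (A : ℚ) n 0 j (a : ℚ) = 0 := by
      unfold gp
      apply mul_eq_zero_of_right
      apply Finset.prod_eq_zero (Finset.mem_range.mpr (by omega : A - a < j))
      rw [Nat.cast_sub ha]
      ring
    rw [this, mul_zero]

theorem binomial_det (n : ℕ) (hn : 0 < n) (α : ℕ → ℕ) (A : ℕ) (hA : ∀ i < n, α i ≤ A) :
    Matrix.det (Matrix.of fun i j : Fin n => (Nat.choose A (α i.1 + j.1) : ℚ)) =
    ((∏ i ∈ Finset.range n, ∏ j ∈ Finset.Ico (i + 1) n, ((α i : ℚ) - (α j : ℚ))) /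
        ∏ i ∈ Finset.range n, (Nat.factorial (α i + n - 1) : ℚ)) *
      ((∏ i ∈ Finset.range n, (Nat.factorial (A + i) : ℚ)) /
        ∏ i ∈ Finset.range n, (Nat.factorial (A - α i) : ℚ)) := by
  set x : Fin n → ℚ := fun i => (α i.1 : ℚ) with hx
  have hmat : (Matrix.of fun i j : Fin n => (Nat.choose A (α i.1 + j.1) : ℚ)) =
      Matrix.of fun i j : Fin n =>
        ((A.factorial : ℚ) / (((α i.1 + n - 1).factorial : ℚ) * ((A - α i.1).factorial : ℚ))) *
          gp (A : ℚ) n 0 j.1 (x i) := by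
    ext i j
    exact entry_q A (α i.1) n j.1 (hA i.1 i.2) j.2
  rw [hmat, Matrix.det_mul_column _ (fun i j : Fin n => gp (A : ℚ) n 0 j.1 (x i))]
  rw [show (Matrix.det fun i j : Fin n => gp (A : ℚ) n 0 j.1 (x i)) =
    Matrix.det (Matrix.of fun i j : Fin n => gp (A : ℚ) n 0 j.1 (x i)) from rfl]
  rw [passes n x (A : ℚ) (n - 1)]
  have hfin : (Matrix.of fun i j : Fin n => gp (A : ℚ) n (n - 1) j.1 (x i)) =
      Matrix.of fun i j : Fin n => ∏ k ∈ range j.1, ((A : ℚ) - x i - k) := by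
    ext i j
    simp only [Matrix.of_apply]
    unfold gp
    rw [Finset.Ico_eq_empty (by omega), Finset.prod_empty, one_mul]
  rw [hfin, detU n (A : ℚ) x]
  -- convert Fin-products to range-products
  have hc : (∏ i : Fin n, ((A.factorial : ℚ) /
      (((α i.1 + n - 1).factorial : ℚ) * ((A - α i.1).factorial : ℚ)))) =
      ∏ i ∈ range n, ((A.factorial : ℚ) /
      (((α i + n - 1).factorial : ℚ) * ((A - α i).factorial : ℚ))) :=
    Fin.prod_univ_eq_prod_range
      (fun i => (A.factorial : ℚ) / (((α i + n - 1).factorial : ℚ) * ((A - α i).factorial : ℚ))) n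
  have hv : (∏ i : Fin n, ∏ j ∈ Finset.Ioi i, (x i - x j)) =
      ∏ i ∈ range n, ∏ j ∈ Finset.Ico (i + 1) n, ((α i : ℚ) - (α j : ℚ)) := by
    have hin : ∀ i : Fin n, ∏ j ∈ Finset.Ioi i, (x i - x j) =
        ∏ j ∈ Finset.Ico (i.1 + 1) n, ((α i.1 : ℚ) - (α j : ℚ)) := by
      intro i
      have h1 : Finset.Ico (i.1 + 1) n = (Finset.Ioi i).map Fin.valEmbedding := by
        rw [Fin.map_valEmbedding_Ioi]
        ext k
        simp only [Finset.mem_Ico, Finset.mem_Ioc, Finset.mem_Ioo]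
        omega
      rw [h1, Finset.prod_map]
      rfl
    rw [Finset.prod_congr rfl (fun i _ => hin i)]
    exact Fin.prod_univ_eq_prod_range (fun i => ∏ j ∈ Finset.Ico (i + 1) n, ((α i : ℚ) - (α j : ℚ))) n
  rw [hc, hv]
  -- final arithmetic
  have hkey : ((A.factorial : ℚ)) ^ n * ∏ t ∈ range (n - 1), ((A : ℚ) + (t + 1)) ^ (n - 1 - t) =
      ∏ i ∈ range n, ((A + i).factorial : ℚ) := by
    have := congrArg (Nat.cast : ℕ → ℚ) (fact_key A n)
    push_cast at this
    rw [this]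
    congr 1
    exact Finset.prod_congr rfl (fun t _ => by rw [← add_assoc])
  set V := ∏ i ∈ range n, ∏ j ∈ Finset.Ico (i + 1) n, ((α i : ℚ) - (α j : ℚ)) with hV
  set D1 := ∏ i ∈ range n, ((α i + n - 1).factorial : ℚ) with hD1
  set D2 := ∏ i ∈ range n, ((A - α i).factorial : ℚ) with hD2
  have hD1ne : D1 ≠ 0 := Finset.prod_ne_zero_iff.mpr
    (fun i _ => Nat.cast_ne_zero.mpr (Nat.factorial_ne_zero _))
  have hD2ne : D2 ≠ 0 := Finset.prod_ne_zero_iff.mpr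
    (fun i _ => Nat.cast_ne_zero.mpr (Nat.factorial_ne_zero _))
  have hsplit : (∏ i ∈ range n, ((A.factorial : ℚ) /
      (((α i + n - 1).factorial : ℚ) * ((A - α i).factorial : ℚ)))) =
      ((A.factorial : ℚ)) ^ n / (D1 * D2) := by
    rw [Finset.prod_div_distrib, Finset.prod_const, Finset.card_range, Finset.prod_mul_distrib]
  rw [hsplit]
  rw [div_mul_eq_mul_div, div_mul_div_comm]
  have hfinal : (A.factorial : ℚ) ^ n *
      ((∏ t ∈ range (n - 1), ((A : ℚ) + (t + 1)) ^ (n - 1 - t)) * V) =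
      V * ∏ i ∈ range n, ((A + i).factorial : ℚ) := by
    rw [← hkey]
    ring
  rw [hfinal]
end

section
/- For any square matrix entries a_{i,j} (0 ≤ i ≤ n, 0 ≤ j ≤ n-1) in a commutative ring, det_{0≤i,j≤n-1}(a_{i,j} + a_{i+1,j}) = Σ_{s=0}^{n} det_{0≤i,j≤n-1}(a_{i + χ(i≥s), j}), where χ(S) = 1 if S is true and 0 otherwise. -/
open Matrix Finset

theorem det_row_sum_expansion {R : Type*} [CommRing R] (n : ℕ) (a : ℕ → ℕ → R) :
    Matrix.det (Matrix.of fun i j : Fin n => a i.1 j.1 + a (i.1 + 1) j.1) =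
    ∑ s ∈ Finset.range (n + 1),
      Matrix.det (Matrix.of fun i j : Fin n =>
        a (i.1 + if s ≤ i.1 then 1 else 0) j.1) := by
  set D : ℕ → ℕ → Matrix (Fin n) (Fin n) R := fun s k =>
    Matrix.of fun i j => if i.1 < k then a (i.1 + if s ≤ i.1 then 1 else 0) j.1
      else a i.1 j.1 + a (i.1 + 1) j.1 with hD
  have key : ∀ k, k ≤ n →
      Matrix.det (Matrix.of fun i j : Fin n => a i.1 j.1 + a (i.1 + 1) j.1)
      = ∑ s ∈ Finset.range (k + 1), (D s k).det := by
    intro k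
    induction k with
    | zero =>
      intro _
      rw [Finset.sum_range_one]
      have h0 : (Matrix.of fun i j : Fin n => a i.1 j.1 + a (i.1 + 1) j.1) = D 0 0 := by
        ext i j; simp [hD]
      rw [h0]
    | succ k ih =>
      intro hk
      have hk' : k < n := hk
      set fk : Fin n := ⟨k, hk'⟩ with hfk
      -- D s k is updateRow of D s (k+1) with the sum row
      have split : ∀ s, D s k =
          (D s (k + 1)).updateRow fk (fun j => a k j.1 + a (k + 1) j.1) := by
        intro s
        ext i j
        by_cases h : i = fk
        · subst h
          simp [hD, hfk]
        · rw [Matrix.updateRow_ne h]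
          have hne : i.1 ≠ k := fun hh => h (Fin.ext hh)
          by_cases h3 : i.1 < k
          · simp [hD, h3, Nat.lt_succ_of_lt h3]
          · have h4 : ¬ i.1 < k + 1 := by omega
            simp [hD, h3, h4]
      -- row k = a (k+1) gives back D s (k+1), when s ≤ k
      have upd2 : ∀ s, s ≤ k →
          (D s (k + 1)).updateRow fk (fun j => a (k + 1) j.1) = D s (k + 1) := by
        intro s hs
        ext i j
        by_cases h : i = fk
        · subst h
          rw [Matrix.updateRow_self]
          simp [hD, hfk, hs, Nat.lt_succ_self]
        · rw [Matrix.updateRow_ne h]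
      -- row k = a k : zero when s < k
      have upd0 : ∀ s, s < k →
          ((D s (k + 1)).updateRow fk (fun j => a k j.1)).det = 0 := by
        intro s hs
        have hk1 : k - 1 < n := by omega
        apply Matrix.det_zero_of_row_eq (i := (⟨k - 1, hk1⟩ : Fin n)) (j := fk)
        · intro h
          have := Fin.mk.injEq (k-1) hk1 k hk' ▸ h
          omega
        · have hne : (⟨k - 1, hk1⟩ : Fin n) ≠ fk := by
            intro h
            have : k - 1 = k := congrArg Fin.val h
            omega
          funext j
          rw [Matrix.updateRow_ne hne, Matrix.updateRow_self]
          have h1 : k - 1 < k + 1 := by omega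
          have h2 : s ≤ k - 1 := by omega
          have h3 : k - 1 + 1 = k := by omega
          simp [hD, h1, h2, h3]
      -- row k = a k with s = k gives D (k+1) (k+1)
      have upd1 : (D k (k + 1)).updateRow fk (fun j => a k j.1)
          = D (k + 1) (k + 1) := by
        ext i j
        by_cases h : i = fk
        · subst h
          have : ¬ (k + 1 ≤ k) := by omega
          simp [hD, hfk, Nat.lt_succ_self, this]
        · rw [Matrix.updateRow_ne h]
          have hne : i.1 ≠ k := fun hh => h (Fin.ext hh)
          by_cases h3 : i.1 < k + 1
          · have h5 : ¬ k ≤ i.1 := by omega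
            have h6 : ¬ k + 1 ≤ i.1 := by omega
            simp [hD, h3, h5, h6]
          · simp [hD, h3]
      rw [ih (le_of_lt hk')]
      have step : ∀ s ∈ Finset.range (k + 1),
          (D s k).det = ((D s (k + 1)).updateRow fk (fun j => a k j.1)).det
            + (D s (k + 1)).det := by
        intro s hs
        rw [Finset.mem_range, Nat.lt_succ_iff] at hs
        rw [split s]
        have : (fun j => a k j.1 + a (k + 1) j.1)
            = (fun j : Fin n => a k j.1) + (fun j => a (k + 1) j.1) := rfl
        rw [this, Matrix.det_updateRow_add, upd2 s hs]
      rw [Finset.sum_congr rfl step, Finset.sum_add_distrib,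
        Finset.sum_range_succ (fun s => ((D s (k+1)).updateRow fk
          (fun j => a k j.1)).det) k,
        Finset.sum_eq_zero (fun s hs => upd0 s (Finset.mem_range.mp hs)),
        zero_add, upd1, Finset.sum_range_succ (fun s => (D s (k+1)).det) (k+1)]
      ring
  rw [key n le_rfl]
  apply Finset.sum_congr rfl
  intro s _
  congr 1
  ext i j
  simp [hD, i.2]
end

section
/- Let n be a positive integer and α_0 < α_1 < ... < α_n non-negative integers (strictly increasing). Then det_{0≤i,j≤n-1}(C_{α_i+j} + C_{α_{i+1}+j}) = ∏_{0≤i<j≤n}(α_j − α_i) · ∏_{i=0}^{n-1} ((i+n)!/(2i)!) · ∏_{i=0}^{n} ((2α_i)!/(α_i!·(α_i+n)!)) · Σ_{s=0}^{n} (α_s!·(α_s+n)!) / ((2α_s)! · ∏_{j=0}^{s-1}(α_s−α_j) · ∏_{j=s+1}^{n}(α_j−α_s)), as an identity of rational numbers. -/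
open Finset Polynomial



lemma fact_add (b j : ℕ) :
    Nat.factorial (b + j) = Nat.factorial b * ∏ k ∈ range j, (b + k + 1) := by
  induction j with
  | zero => simp
  | succ j ih =>
      rw [prod_range_succ, ← mul_assoc, ← ih, ← Nat.add_assoc, Nat.factorial_succ]
      ring

lemma fact_two_add (b j : ℕ) :
    Nat.factorial (2*b + 2*j) = Nat.factorial (2*b) *
      ((∏ k ∈ range j, (2*b + 2*k + 1)) * 2^j * ∏ k ∈ range j, (b + k + 1)) := by
  induction j with
  | zero => simp
  | succ j ih =>
      have h : 2*b + 2*(j+1) = (2*b + 2*j + 1) + 1 := by ring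
      rw [h, Nat.factorial_succ, Nat.factorial_succ, ih, prod_range_succ, prod_range_succ]
      ring

lemma fact_add_of_le (b j n : ℕ) (h : j + 1 ≤ n) :
    Nat.factorial (b + n) = Nat.factorial (b + j + 1) * ∏ k ∈ Icc (j+2) n, (b + k) := by
  induction n with
  | zero => omega
  | succ n ih =>
      rcases Nat.lt_or_ge (j+1) (n+1) with hlt | hge
      · have hj : j + 1 ≤ n := by omega
        rw [prod_Icc_succ_top (by omega), ← mul_assoc, ← ih hj, ← Nat.add_assoc,
          Nat.factorial_succ]
        ring
      · have : j = n := by omega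
        subst this
        rw [Icc_eq_empty (by omega), prod_empty, mul_one, ← Nat.add_assoc]

lemma catalan_cast (m : ℕ) :
    (catalan m : ℚ) = (Nat.factorial (2*m) : ℚ) /
      ((Nat.factorial m : ℚ) * (Nat.factorial (m+1) : ℚ)) := by
  have h1 : (m + 1) * catalan m = Nat.centralBinom m := succ_mul_catalan_eq_centralBinom m
  have h2 : Nat.centralBinom m * (Nat.factorial m * Nat.factorial m) = Nat.factorial (2*m) := by
    have := Nat.choose_mul_factorial_mul_factorial (Nat.le_mul_of_pos_left m (by norm_num) : m ≤ 2*m)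
    rw [show 2*m - m = m by omega] at this
    rw [Nat.centralBinom, ← this]
    ring
  have hm : (Nat.factorial m : ℚ) ≠ 0 := Nat.cast_ne_zero.mpr (Nat.factorial_ne_zero m)
  have hm1 : (Nat.factorial (m+1) : ℚ) ≠ 0 := Nat.cast_ne_zero.mpr (Nat.factorial_ne_zero _)
  rw [eq_div_iff (by positivity)]
  have e1 := congrArg (fun x : ℕ => (x : ℚ)) h1
  have e2 := congrArg (fun x : ℕ => (x : ℚ)) h2
  push_cast at e1 e2
  rw [Nat.factorial_succ]
  push_cast
  nlinarith [e1, e2]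


lemma entry_eq (b j n : ℕ) (h : j + 1 ≤ n) :
    (catalan (b + j) : ℚ) =
      ((Nat.factorial (2*b) : ℚ) / ((Nat.factorial b : ℚ) * (Nat.factorial (b+n) : ℚ))) *
      (2^j * (∏ k ∈ range j, (2*(b:ℚ) + 2*k + 1)) * ∏ k ∈ Icc (j+2) n, ((b:ℚ) + k)) := by
  have key : Nat.factorial (2*b+2*j) * (Nat.factorial b * Nat.factorial (b+n)) =
      Nat.factorial (2*b) *
        (2^j * (∏ k ∈ range j, (2*b+2*k+1)) * ∏ k ∈ Icc (j+2) n, (b+k)) *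
        (Nat.factorial (b+j) * Nat.factorial (b+j+1)) := by
    rw [fact_two_add, fact_add_of_le b j n h, fact_add b j]
    ring
  have hb : (Nat.factorial b : ℚ) ≠ 0 := Nat.cast_ne_zero.mpr (Nat.factorial_ne_zero _)
  have hbn : (Nat.factorial (b+n) : ℚ) ≠ 0 := Nat.cast_ne_zero.mpr (Nat.factorial_ne_zero _)
  have hbj : (Nat.factorial (b+j) : ℚ) ≠ 0 := Nat.cast_ne_zero.mpr (Nat.factorial_ne_zero _)
  have hbj1 : (Nat.factorial (b+j+1) : ℚ) ≠ 0 := Nat.cast_ne_zero.mpr (Nat.factorial_ne_zero _)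
  rw [catalan_cast, show 2*(b+j) = 2*b+2*j by ring, show b+j+1 = (b+j)+1 from rfl]
  have keyQ := congrArg (fun x : ℕ => (x : ℚ)) key
  push_cast at keyQ
  field_simp
  simp only [mul_add] at keyQ ⊢
  linear_combination keyQ


lemma rising_vandermonde {R : Type*} [CommRing R] (x y : R) (m : ℕ) :
    ∏ s ∈ range m, (x + y + (s:R)) =
    ∑ r ∈ range (m+1), (m.choose r : R) * (∏ s ∈ range r, (x + (s:R))) *
      (∏ s ∈ range (m-r), (y + (s:R))) := by
  induction m with
  | zero => simp
  | succ m ih =>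
    symm
    have hA : ∀ r : ℕ, (∏ s ∈ range (r+1), (x + (s:R))) =
        (∏ s ∈ range r, (x + (s:R))) * (x + (r:R)) := fun r => prod_range_succ _ r
    have hB : ∀ r : ℕ, r ≤ m → (∏ s ∈ range (m+1-r), (y + (s:R))) =
        (∏ s ∈ range (m-r), (y + (s:R))) * (y + ((m:R) - (r:R))) := by
      intro r hr
      rw [show m + 1 - r = (m - r) + 1 by omega, prod_range_succ, Nat.cast_sub hr]
    calc ∑ r ∈ range (m+2), ((m+1).choose r : R) * (∏ s ∈ range r, (x + (s:R))) *
          (∏ s ∈ range (m+1-r), (y + (s:R)))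
        = (∑ r ∈ range (m+1), ((m+1).choose (r+1) : R) * (∏ s ∈ range (r+1), (x + (s:R))) *
            (∏ s ∈ range (m-r), (y + (s:R)))) + ∏ s ∈ range (m+1), (y + (s:R)) := by
          rw [Finset.sum_range_succ']
          simp only [Nat.choose_zero_right, Nat.cast_one, prod_range_zero, Nat.sub_zero, one_mul,
            mul_one]
          congr 1
          exact sum_congr rfl fun r _ => by rw [show m + 1 - (r+1) = m - r by omega]
      _ = (∑ r ∈ range (m+1), (m.choose r : R) * (∏ s ∈ range r, (x + (s:R))) *
            ((x + (r:R)) * ∏ s ∈ range (m-r), (y + (s:R)))) +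
          ((∑ r ∈ range (m+1), (m.choose (r+1) : R) * (∏ s ∈ range (r+1), (x + (s:R))) *
            (∏ s ∈ range (m-r), (y + (s:R)))) + ∏ s ∈ range (m+1), (y + (s:R))) := by
          rw [← add_assoc, ← sum_add_distrib]
          congr 1
          apply sum_congr rfl
          intro r _
          rw [Nat.choose_succ_succ, hA r]
          push_cast
          ring
      _ = (∑ r ∈ range (m+1), (m.choose r : R) * (∏ s ∈ range r, (x + (s:R))) *
            ((x + (r:R)) * ∏ s ∈ range (m-r), (y + (s:R)))) +
          ∑ r ∈ range (m+1), (m.choose r : R) * (∏ s ∈ range r, (x + (s:R))) *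
            (∏ s ∈ range (m+1-r), (y + (s:R))) := by
          congr 1
          rw [Finset.sum_range_succ' (fun r => (m.choose r : R) * (∏ s ∈ range r, (x + (s:R))) *
            (∏ s ∈ range (m+1-r), (y + (s:R)))) m, Finset.sum_range_succ]
          simp only [Nat.choose_zero_right, Nat.cast_one, prod_range_zero, Nat.sub_zero, one_mul,
            mul_one, Nat.choose_succ_self, Nat.cast_zero, zero_mul, add_zero]
          congr 1
          exact sum_congr rfl fun r _ => by rw [show m + 1 - (r+1) = m - r by omega]
      _ = ∑ r ∈ range (m+1), (m.choose r : R) * (∏ s ∈ range r, (x + (s:R))) *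
            (∏ s ∈ range (m-r), (y + (s:R))) * (x + y + (m:R)) := by
          rw [← sum_add_distrib]
          apply sum_congr rfl
          intro r hr
          rw [mem_range] at hr
          rw [hB r (by omega)]
          ring
      _ = (∏ s ∈ range m, (x + y + (s:R))) * (x + y + (m:R)) := by rw [← Finset.sum_mul, ← ih]
      _ = ∏ s ∈ range (m+1), (x + y + (s:R)) := (prod_range_succ _ m).symm


noncomputable def qq (t : ℕ) : ℚ := ∏ s ∈ range t, ((2*s+3)/2 : ℚ)

lemma qq_eq (t : ℕ) : qq t = (Nat.factorial (2*t+1) : ℚ) / (4^t * Nat.factorial t) := by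
  induction t with
  | zero => simp [qq]
  | succ t ih =>
      have e1 : Nat.factorial (2*(t+1)+1) = (2*t+3) * ((2*t+2) * Nat.factorial (2*t+1)) := by
        rw [show 2*(t+1)+1 = (2*t+2)+1 by ring, Nat.factorial_succ,
          show 2*t+2 = (2*t+1)+1 from rfl, Nat.factorial_succ]
      rw [qq, prod_range_succ, ← qq, ih, e1, Nat.factorial_succ t]
      have hf : (Nat.factorial (2*t+1) : ℚ) ≠ 0 := Nat.cast_ne_zero.mpr (Nat.factorial_ne_zero _)
      have hft : (Nat.factorial t : ℚ) ≠ 0 := Nat.cast_ne_zero.mpr (Nat.factorial_ne_zero _)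
      field_simp
      push_cast
      ring

lemma prod_fact_split (n : ℕ) :
    ∏ k ∈ range (2*n), Nat.factorial k =
      (∏ t ∈ range n, Nat.factorial (2*t)) * ∏ t ∈ range n, Nat.factorial (2*t+1) := by
  induction n with
  | zero => simp
  | succ n ih =>
      have h : 2*(n+1) = (2*n) + 1 + 1 := by ring
      rw [h, prod_range_succ, prod_range_succ, ih, prod_range_succ, prod_range_succ]
      ring

lemma prod_fact_split2 (n : ℕ) :
    ∏ k ∈ range (2*n), Nat.factorial k =
      (∏ t ∈ range n, Nat.factorial t) * ∏ i ∈ range n, Nat.factorial (i+n) := by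
  rw [← Finset.prod_range_mul_prod_Ico (fun k => Nat.factorial k) (show n ≤ 2*n by omega)]
  congr 1
  rw [Finset.prod_Ico_eq_prod_range]
  have h : 2*n - n = n := by omega
  rw [h]
  exact prod_congr rfl fun i _ => by rw [Nat.add_comm]

lemma const_eq (n : ℕ) :
    (∏ t ∈ range n, ((Nat.factorial (2*t+1) : ℚ) / (Nat.factorial t : ℚ))) =
      ∏ i ∈ range n, ((Nat.factorial (i+n) : ℚ) / (Nat.factorial (2*i) : ℚ)) := by
  rw [prod_div_distrib, prod_div_distrib]
  rw [div_eq_div_iff (by positivity) (by positivity)]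
  have key : (∏ t ∈ range n, Nat.factorial (2*t+1)) * (∏ i ∈ range n, Nat.factorial (2*i)) =
      (∏ i ∈ range n, Nat.factorial (i+n)) * ∏ t ∈ range n, Nat.factorial t := by
    have h := (prod_fact_split n).symm.trans (prod_fact_split2 n)
    rw [mul_comm, mul_comm (∏ i ∈ range n, Nat.factorial (i+n))]
    exact h
  exact_mod_cast congrArg (fun x : ℕ => (x:ℚ)) key

lemma Kconst (n : ℕ) :
    (∏ j ∈ range n, ((2:ℚ)^j * qq (n-1-j))) * ∏ j ∈ range n, (2:ℚ)^j =
      ∏ i ∈ range n, ((Nat.factorial (i+n) : ℚ) / (Nat.factorial (2*i) : ℚ)) := by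
  rw [prod_mul_distrib, Finset.prod_range_reflect (fun j => qq j) n]
  rw [← const_eq]
  rw [mul_comm, ← mul_assoc, ← prod_mul_distrib, ← prod_mul_distrib]
  apply prod_congr rfl
  intro t _
  rw [qq_eq]
  have hft : (Nat.factorial t : ℚ) ≠ 0 := Nat.cast_ne_zero.mpr (Nat.factorial_ne_zero _)
  field_simp
  rw [show (4:ℚ) = 2^2 by norm_num, ← pow_mul]
  ring_nf
  rw [mul_comm, pow_mul]
  norm_num



noncomputable def uP (m : ℕ) : ℚ[X] := ∏ k ∈ range m, (C 2 * X + C (2*(k:ℚ)+1))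

noncomputable def pP (n j : ℕ) : ℚ[X] :=
  C ((2:ℚ)^j) * uP j * ∏ k ∈ Icc (j+2) n, (X + C (k:ℚ))

noncomputable def dm (n m j : ℕ) : ℚ :=
  if j ≤ m then 4^j * ((n-1-j).choose (m-j) : ℚ) * qq (n-1-m) / 2^m else 0

lemma key_T (n j : ℕ) (hj : j < n) :
    ∑ r ∈ range (n-j), C (((n-1-j).choose r : ℚ) * qq (n-1-j-r) / 2^r) *
      ∏ s ∈ range r, (C 2 * X + C (2*((j+s:ℕ):ℚ)+1)) =
    ∏ k ∈ Icc (j+2) n, (X + C (k:ℚ)) := by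
  set x : ℚ[X] := X + C ((j:ℚ) + 1/2) with hx
  set y : ℚ[X] := C (3/2 : ℚ) with hy
  set m0 := n - 1 - j with hm0
  have hnj : n - j = m0 + 1 := by omega
  -- transform each product of linear factors
  have hfac1 : ∀ s : ℕ, C 2 * X + C (2*((j+s:ℕ):ℚ)+1) = C 2 * (x + ((s:ℕ):ℚ[X])) := by
    intro s
    rw [hx, ← C_eq_natCast s, mul_add, mul_add, ← C_mul, ← C_mul]
    rw [add_assoc]
    congr 1
    rw [← C_add]
    congr 1
    push_cast
    ring
  have hfac : ∀ r : ℕ, (∏ s ∈ range r, (C 2 * X + C (2*((j+s:ℕ):ℚ)+1))) =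
      C ((2:ℚ)^r) * ∏ s ∈ range r, (x + (s:ℚ[X])) := by
    intro r
    rw [C_pow]
    calc ∏ s ∈ range r, (C 2 * X + C (2*((j+s:ℕ):ℚ)+1))
        = ∏ s ∈ range r, (C 2 * (x + (s:ℚ[X]))) := prod_congr rfl fun s _ => hfac1 s
      _ = (∏ _s ∈ range r, C (2:ℚ)) * ∏ s ∈ range r, (x + (s:ℚ[X])) := prod_mul_distrib
      _ = C (2:ℚ) ^ r * ∏ s ∈ range r, (x + (s:ℚ[X])) := by rw [prod_const, card_range]
  have hq : ∀ t : ℕ, (C (qq t) : ℚ[X]) = ∏ s ∈ range t, (y + (s:ℚ[X])) := by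
    intro t
    rw [qq, map_prod]
    apply prod_congr rfl
    intro s _
    rw [hy, ← C_eq_natCast s, ← C_add]
    congr 1
    push_cast
    ring
  calc ∑ r ∈ range (n-j), C (((n-1-j).choose r : ℚ) * qq (n-1-j-r) / 2^r) *
        ∏ s ∈ range r, (C 2 * X + C (2*((j+s:ℕ):ℚ)+1))
      = ∑ r ∈ range (m0+1), (m0.choose r : ℚ[X]) * (∏ s ∈ range r, (x + (s:ℚ[X]))) *
          (∏ s ∈ range (m0-r), (y + (s:ℚ[X]))) := by
        rw [hnj]
        apply sum_congr rfl
        intro r hr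
        rw [hfac r, ← hq (m0 - r), show n-1-j-r = m0 - r by omega, ← hm0]
        rw [show (((m0.choose r : ℕ)):ℚ[X]) = C ((m0.choose r : ℕ) : ℚ) by
          rw [Polynomial.C_eq_natCast]]
        rw [show C ((m0.choose r:ℚ) * qq (m0 - r) / 2^r) *
            (C ((2:ℚ)^r) * ∏ s ∈ range r, (x + (s:ℚ[X]))) =
            C ((m0.choose r:ℚ) * qq (m0 - r) / 2^r * 2^r) * ∏ s ∈ range r, (x + (s:ℚ[X])) by
          rw [C_mul]; ring]
        rw [show ((m0.choose r : ℚ)) * qq (m0 - r) / 2^r * 2^r =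
          (m0.choose r : ℚ) * qq (m0-r) by field_simp]
        rw [C_mul]
        ring
      _ = ∏ s ∈ range m0, (x + y + (s:ℚ[X])) := (rising_vandermonde x y m0).symm
      _ = ∏ k ∈ Icc (j+2) n, (X + C (k:ℚ)) := by
        rw [show Icc (j+2) n = Ico (j+2) (n+1) by rw [Finset.Ico_add_one_right_eq_Icc]]
        rw [Finset.prod_Ico_eq_prod_range]
        rw [show n + 1 - (j+2) = m0 by omega]
        apply prod_congr rfl
        intro s _
        rw [hx, hy, ← C_eq_natCast s, add_assoc (X + C ((j:ℚ)+1/2)), ← C_add, add_assoc X,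
          ← C_add]
        congr 1
        push_cast
        ring

lemma uP_split (j r : ℕ) :
    uP (j + r) = uP j * ∏ s ∈ range r, (C 2 * X + C (2*((j+s:ℕ):ℚ)+1)) := by
  rw [uP, uP, ← Finset.prod_range_mul_prod_Ico _ (show j ≤ j + r by omega)]
  congr 1
  rw [Finset.prod_Ico_eq_prod_range, show j + r - j = r by omega]

lemma pP_eq (n j : ℕ) (hj : j < n) :
    pP n j = ∑ m ∈ range n, C (dm n m j) * uP m := by
  rw [← Finset.sum_range_add_sum_Ico _ (le_of_lt hj)]
  have h1 : ∑ m ∈ range j, C (dm n m j) * uP m = 0 := by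
    apply sum_eq_zero
    intro m hm
    rw [mem_range] at hm
    rw [dm, if_neg (by omega), map_zero, zero_mul]
  rw [h1, zero_add, Finset.sum_Ico_eq_sum_range, show n - j = n - j from rfl]
  have h2 : ∀ r ∈ range (n - j), C (dm n (j + r) j) * uP (j + r) =
      C ((2:ℚ)^j) * uP j * (C (((n-1-j).choose r : ℚ) * qq (n-1-j-r) / 2^r) *
        ∏ s ∈ range r, (C 2 * X + C (2*((j+s:ℕ):ℚ)+1))) := by
    intro r hr
    rw [dm, if_pos (by omega), show j + r - j = r by omega, show n - 1 - (j+r) = n-1-j-r by omega]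
    rw [uP_split j r]
    rw [show (4:ℚ)^j * ((n-1-j).choose r : ℚ) * qq (n-1-j-r) / 2^(j+r) =
      (2:ℚ)^j * (((n-1-j).choose r : ℚ) * qq (n-1-j-r) / 2^r) by
        rw [show (4:ℚ) = 2^2 by norm_num, ← pow_mul, pow_add]
        field_simp
        ring]
    rw [C_mul]
    ring
  rw [sum_congr rfl h2, ← Finset.mul_sum, key_T n j hj, pP]


lemma uP_natDegree (m : ℕ) : (uP m).natDegree = m := by
  rw [uP, natDegree_prod]
  · rw [Finset.sum_congr rfl (fun k _ => natDegree_linear (two_ne_zero : (2:ℚ) ≠ 0))]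
    simp
  · intro k _
    intro hcon
    have := natDegree_linear (a := (2:ℚ)) (b := (2*(k:ℚ)+1)) two_ne_zero
    rw [hcon] at this
    simp at this

lemma uP_leadingCoeff (m : ℕ) : (uP m).leadingCoeff = 2^m := by
  rw [uP, leadingCoeff_prod]
  simp_rw [leadingCoeff_linear (two_ne_zero : (2:ℚ) ≠ 0)]
  simp

lemma pP_eval (n j : ℕ) (t : ℕ) :
    (pP n j).eval (t:ℚ) =
      2^j * (∏ k ∈ range j, (2*(t:ℚ) + 2*k + 1)) * ∏ k ∈ Icc (j+2) n, ((t:ℚ) + k) := by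
  rw [pP, eval_mul, eval_mul, eval_C, uP, eval_prod, eval_prod]
  congr 1
  · congr 1
    apply prod_congr rfl
    intro k _
    simp only [eval_add, eval_mul, eval_C, eval_X]
    ring
  · apply prod_congr rfl
    intro k _
    simp only [eval_add, eval_C, eval_X]

lemma det_eval_factor {n : ℕ} (v : Fin n → ℚ) (p : Fin n → ℚ[X])
    (hd : ∀ j, (p j).natDegree < n) :
    Matrix.det (Matrix.of fun i j => (p j).eval (v i)) =
    Matrix.det (Matrix.vandermonde v) *
      Matrix.det (Matrix.of fun i j : Fin n => (p j).coeff i) := by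
  rw [← Matrix.det_mul]
  congr 1
  ext i j
  rw [Matrix.mul_apply, Matrix.of_apply, eval, eval₂]
  simp only [eq_intCast, Int.cast_id, Matrix.vandermonde]
  have hsupp : (p j).support ⊆ range n := supp_subset_range (hd j)
  rw [sum_eq_of_subset _ (fun j => zero_mul ((v i) ^ j)) hsupp, ← Fin.sum_univ_eq_sum_range]
  congr
  ext k
  rw [mul_comm, Matrix.of_apply, RingHom.id_apply]
  rfl

lemma lemA (n : ℕ) (b : Fin n → ℕ) :
    Matrix.det (Matrix.of fun i j : Fin n => (catalan (b i + j.1) : ℚ)) =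
    (∏ i : Fin n, ∏ k ∈ Finset.Ioi i, ((b k : ℚ) - (b i : ℚ))) *
    (∏ i ∈ range n, ((Nat.factorial (i+n) : ℚ) / (Nat.factorial (2*i) : ℚ))) *
    ∏ i : Fin n, ((Nat.factorial (2*(b i)) : ℚ) /
      ((Nat.factorial (b i) : ℚ) * (Nat.factorial (b i + n) : ℚ))) := by
  set w : Fin n → ℚ := fun i => (Nat.factorial (2*(b i)) : ℚ) /
      ((Nat.factorial (b i) : ℚ) * (Nat.factorial (b i + n) : ℚ)) with hw
  have hM : (Matrix.of fun i j : Fin n => (catalan (b i + j.1) : ℚ)) =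
      Matrix.of (fun i j : Fin n =>
        w i * (Matrix.of fun i j : Fin n => (pP n j.1).eval ((b i : ℚ))) i j) := by
    ext i j
    simp only [Matrix.of_apply]
    rw [pP_eval n j.1 (b i), entry_eq (b i) j.1 n j.2, hw]
  rw [hM, Matrix.det_mul_column w]
  have hdeg : ∀ j : Fin n, (pP n (j:ℕ)).natDegree < n := by
    intro j
    rw [pP]
    calc (C ((2:ℚ)^(j:ℕ)) * uP j * ∏ k ∈ Icc ((j:ℕ)+2) n, (X + C (k:ℚ))).natDegree
        ≤ (C ((2:ℚ)^(j:ℕ)) * uP j).natDegree +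
          (∏ k ∈ Icc ((j:ℕ)+2) n, (X + C (k:ℚ))).natDegree := natDegree_mul_le
      _ ≤ ((C ((2:ℚ)^(j:ℕ))).natDegree + (uP j).natDegree) +
          (∏ k ∈ Icc ((j:ℕ)+2) n, (X + C (k:ℚ))).natDegree := by
          gcongr; exact natDegree_mul_le
      _ ≤ 0 + (j:ℕ) + ∑ k ∈ Icc ((j:ℕ)+2) n, (X + C (k:ℚ)).natDegree := by
          gcongr
          · exact le_of_eq (natDegree_C _)
          · exact le_of_eq (uP_natDegree _)
          · exact natDegree_prod_le _ _
      _ ≤ 0 + (j:ℕ) + ∑ k ∈ Icc ((j:ℕ)+2) n, 1 := by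
          gcongr with k hk
          exact le_of_eq (natDegree_X_add_C _)
      _ < n := by
          simp only [sum_const, smul_eq_mul, mul_one, zero_add, Nat.card_Icc]
          have := j.2
          omega
  have heval : Matrix.det (Matrix.of fun i j : Fin n => (pP n (j:ℕ)).eval ((b i : ℚ))) =
      Matrix.det (Matrix.vandermonde (fun i => (b i : ℚ))) *
      Matrix.det (Matrix.of fun i j : Fin n => (pP n (j:ℕ)).coeff i) :=
    det_eval_factor _ _ hdeg
  -- coefficient matrix factorization
  have hcoeff : (Matrix.of fun i j : Fin n => (pP n (j:ℕ)).coeff i) =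
      (Matrix.of fun i m : Fin n => (uP (m:ℕ)).coeff i) *
      (Matrix.of fun m j : Fin n => dm n (m:ℕ) (j:ℕ)) := by
    ext i j
    rw [Matrix.mul_apply, Matrix.of_apply, pP_eq n j.1 j.2]
    rw [finset_sum_coeff]
    rw [← Fin.sum_univ_eq_sum_range (fun m => (C (dm n m (j:ℕ)) * uP m).coeff (i:ℕ)) n]
    apply Finset.sum_congr rfl
    intro m _
    rw [coeff_C_mul, Matrix.of_apply, Matrix.of_apply, mul_comm]
  have hU : Matrix.det (Matrix.of fun i m : Fin n => (uP (m:ℕ)).coeff i) =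
      ∏ m ∈ range n, (2:ℚ)^m := by
    rw [Matrix.det_of_upperTriangular (Matrix.matrixOfPolynomials_blockTriangular
      (fun m : Fin n => uP (m:ℕ)) (fun m => le_of_eq (uP_natDegree _)))]
    rw [← Fin.prod_univ_eq_prod_range (fun m => (2:ℚ)^m) n]
    apply Finset.prod_congr rfl
    intro m _
    rw [Matrix.of_apply]
    have hc := coeff_natDegree (p := uP (m:ℕ))
    rw [uP_leadingCoeff, uP_natDegree] at hc
    exact hc
  have hD : Matrix.det (Matrix.of fun m j : Fin n => dm n (m:ℕ) (j:ℕ)) =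
      ∏ j ∈ range n, ((2:ℚ)^j * qq (n-1-j)) := by
    rw [Matrix.det_of_lowerTriangular _ ?_]
    · rw [← Fin.prod_univ_eq_prod_range (fun j => (2:ℚ)^j * qq (n-1-j)) n]
      apply Finset.prod_congr rfl
      intro m _
      rw [Matrix.of_apply, dm, if_pos (le_refl _)]
      rw [Nat.sub_self, Nat.choose_zero_right]
      rw [show (4:ℚ) = 2^2 by norm_num, ← pow_mul]
      push_cast
      field_simp
      ring
    · intro i j hij
      rw [Matrix.of_apply, dm, if_neg]
      exact fun h => absurd (lt_of_lt_of_le hij h) (lt_irrefl _)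
  rw [heval, hcoeff, Matrix.det_mul, hU, hD, Matrix.det_vandermonde]
  rw [← Kconst n]
  ring


def es (s i : ℕ) : ℕ := if i < s then i else i + 1

lemma det_expand (n : ℕ) (α : ℕ → ℕ) :
    Matrix.det (Matrix.of fun i j : Fin n =>
      (catalan (α i.1 + j.1) : ℚ) + (catalan (α (i.1 + 1) + j.1) : ℚ)) =
    ∑ s ∈ range (n+1),
      Matrix.det (Matrix.of fun i j : Fin n => (catalan (α (es s i.1) + j.1) : ℚ)) := by
  classical
  -- rows as sums over Bool
  set g : Fin n → Bool → (Fin n → ℚ) :=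
    fun i b => fun j => (catalan (α (i.1 + (if b then 1 else 0)) + j.1) : ℚ) with hg
  have hrow : (fun i : Fin n => (Matrix.of fun i j : Fin n =>
      (catalan (α i.1 + j.1) : ℚ) + (catalan (α (i.1 + 1) + j.1) : ℚ)) i) =
      fun i => ∑ b : Bool, g i b := by
    funext i
    funext j
    simp [hg, Fintype.sum_bool, add_comm]
  have expand := (Matrix.detRowAlternating (R := ℚ) (n := Fin n)).toMultilinearMap.map_sum g
  have hdet : Matrix.det (Matrix.of fun i j : Fin n =>
      (catalan (α i.1 + j.1) : ℚ) + (catalan (α (i.1 + 1) + j.1) : ℚ)) =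
      ∑ r : Fin n → Bool, Matrix.detRowAlternating (fun i => g i (r i)) := by
    rw [Matrix.det]
    rw [show (Matrix.of fun i j : Fin n =>
      (catalan (α i.1 + j.1) : ℚ) + (catalan (α (i.1 + 1) + j.1) : ℚ)) =
      (fun i => ∑ b : Bool, g i b) from funext fun i => congrFun hrow i]
    exact expand
  rw [hdet]
  -- the cut functions
  set cut : ℕ → (Fin n → Bool) := fun s i => decide (s ≤ i.1) with hcut
  have hinj : Set.InjOn cut (range (n+1)) := by
    intro s hs t ht hst
    by_contra hne
    simp only [coe_range, Set.mem_Iio] at hs ht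
    have key : ∀ a b : ℕ, a < b → a < n + 1 → b < n + 1 → cut a ≠ cut b := by
      intro a b hab ha hb
      intro h
      have han : a < n := by omega
      have := congrFun h ⟨a, han⟩
      simp only [hcut] at this
      rw [decide_eq_true (by omega : a ≤ a), eq_comm, decide_eq_true_eq] at this
      omega
    rcases Nat.lt_or_ge s t with h | h
    · exact key s t h hs ht hst
    · exact key t s (by omega) ht hs hst.symm
  have himage : ∀ r : Fin n → Bool, r ∉ (range (n+1)).image cut →
      Matrix.detRowAlternating (fun i => g i (r i)) = 0 := by
    intro r hr
    -- If no descent, r is a cut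
    by_cases hdesc : ∃ i : Fin n, ∃ h : i.1 + 1 < n, r i = true ∧ r ⟨i.1 + 1, h⟩ = false
    · obtain ⟨i, hi1, hi2, hi3⟩ := hdesc
      apply (Matrix.detRowAlternating (R := ℚ) (n := Fin n)).map_eq_zero_of_eq
        _ (i := i) (j := ⟨i.1+1, hi1⟩)
      · funext j
        simp [hg, hi2, hi3]
      · intro hcon
        have := congrArg Fin.val hcon
        simp at this
    · exfalso
      apply hr
      -- monotonicity
      have mono : ∀ d (i : Fin n), r i = true → ∀ k : Fin n, k.1 = i.1 + d → r k = true := by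
        intro d
        induction d with
        | zero =>
            intro i hi k hk
            rwa [show k = i from Fin.ext (by omega)]
        | succ d ih =>
            intro i hi k hk
            have hd : i.1 + d < n := by omega
            have h1 : r ⟨i.1 + d, hd⟩ = true := ih i hi ⟨i.1+d, hd⟩ rfl
            have h2 : (⟨i.1+d, hd⟩ : Fin n).1 + 1 < n := by simp only []; omega
            have h4 : r ⟨i.1 + d + 1, by omega⟩ = true := by
              by_contra hcon
              exact hdesc ⟨⟨i.1+d, hd⟩, h2, h1, by simpa using hcon⟩

            rwa [show k = ⟨i.1 + d + 1, by omega⟩ from Fin.ext (by simp only []; omega)]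
      have hex : ∃ m : ℕ, ∀ i : Fin n, m ≤ i.1 → r i = true := by
        exact ⟨n, fun i hi => absurd i.2 (by omega)⟩
      set s := Nat.find hex with hs
      have hsn : s ≤ n := Nat.find_le (fun i hi => absurd i.2 (by omega))
      refine mem_image.mpr ⟨s, by simp only [mem_range]; omega, ?_⟩
      funext i
      show cut s i = r i
      rcases Nat.lt_or_ge i.1 s with h | h
      · have hc : cut s i = false := by
          simp only [hcut]
          rw [decide_eq_false (by omega : ¬ (s ≤ i.1))]
        rw [hc]
        by_contra hcon
        have hri : r i = true := by
          cases hr : r i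
          · exact absurd hr.symm hcon
          · rfl
        have hall : ∀ k : Fin n, i.1 ≤ k.1 → r k = true := by
          intro k hk
          exact mono (k.1 - i.1) i hri k (by omega)
        have hle : s ≤ i.1 := Nat.find_le hall
        omega
      · have hc : cut s i = true := by
          simp only [hcut]
          rw [decide_eq_true (by omega : s ≤ i.1)]
        rw [hc]
        exact (Nat.find_spec hex i h).symm
  rw [← Finset.sum_subset (Finset.subset_univ ((range (n+1)).image cut))
    (fun r _ hr => himage r hr)]
  rw [Finset.sum_image (fun s hs t ht h => hinj hs ht h)]
  apply Finset.sum_congr rfl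
  intro s hs
  rw [Matrix.det]
  congr 1
  funext i
  funext j
  simp only [hg, Matrix.of_apply]
  rcases Nat.lt_or_ge i.1 s with h | h
  · have hc : cut s i = false := by
      simp only [hcut]
      rw [decide_eq_false (by omega : ¬ (s ≤ i.1))]
    rw [hc, show es s i.1 = i.1 by rw [es, if_pos h]]
    simp
  · have hc : cut s i = true := by
      simp only [hcut]
      rw [decide_eq_true (by omega : s ≤ i.1)]
    rw [hc, show es s i.1 = i.1 + 1 by rw [es, if_neg (by omega)]]
    simp


def ds (s k : ℕ) : ℕ := if k < s then k else k - 1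

lemma prod_erase_reindex (n s : ℕ) (hs : s ≤ n) (F : ℕ → ℚ) :
    ∏ i ∈ range (n+1), F i = F s * ∏ i ∈ range n, F (es s i) := by
  have hins := Finset.mul_prod_erase (range (n+1)) F (mem_range.mpr (show s < n+1 by omega))
  rw [← hins]
  congr 1
  refine (Finset.prod_nbij' (fun i => es s i) (fun k => ds s k) ?_ ?_ ?_ ?_ ?_).symm
  · intro a ha
    simp only [mem_range] at ha
    simp only [mem_erase, mem_range, es]
    split_ifs <;> omega
  · intro a ha
    simp only [mem_erase, mem_range] at ha
    simp only [mem_range, ds]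
    split_ifs <;> omega
  · intro a ha
    simp only [mem_range] at ha
    simp only [es, ds]
    split_ifs <;> omega
  · intro a ha
    simp only [mem_erase, mem_range] at ha
    simp only [es, ds]
    split_ifs <;> omega
  · intro a _
    rfl

lemma fin_pairs (n : ℕ) (f : ℕ → ℕ → ℚ) :
    ∏ i : Fin n, ∏ k ∈ Finset.Ioi i, f k.1 i.1 =
    ∏ i ∈ range n, ∏ k ∈ Ico (i+1) n, f k i := by
  rw [← Fin.prod_univ_eq_prod_range (fun i => ∏ k ∈ Ico (i+1) n, f k i) n]
  apply Finset.prod_congr rfl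
  intro i _
  have h1 : (Finset.Ioi i).map Fin.valEmbedding = Ioo (i.1) n := Fin.map_valEmbedding_Ioi i
  have h2 : Ioo (i.1) n = Ico (i.1+1) n := by
    ext k
    simp only [mem_Ioo, mem_Ico]
    have := i.2
    omega
  rw [← h2, ← h1, Finset.prod_map]
  rfl

lemma vand_split (n s : ℕ) (hs : s ≤ n) (G : ℕ → ℕ → ℚ) :
    ∏ i ∈ range (n+1), ∏ j ∈ Ico (i+1) (n+1), G i j =
    ((∏ j ∈ range s, G j s) * ∏ j ∈ Icc (s+1) n, G s j) *
      ∏ i ∈ range n, ∏ k ∈ Ico (i+1) n, G (es s i) (es s k) := by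
  classical
  rw [prod_sigma', prod_sigma']
  rw [← Finset.prod_filter_mul_prod_filter_not
    ((range (n+1)).sigma (fun i => Ico (i+1) (n+1))) (fun p => p.1 = s ∨ p.2 = s)]
  congr 1
  · rw [filter_or, Finset.prod_union]
    · rw [mul_comm ((∏ j ∈ range s, G j s))]
      congr 1
      · -- pairs (s, j)
        refine Finset.prod_nbij' (fun p => p.2) (fun j => (⟨s, j⟩ : (_ : ℕ) × ℕ)) ?_ ?_ ?_ ?_ ?_
        · intro p hp
          simp only [mem_filter, mem_sigma, mem_range, mem_Ico] at hp
          simp only [mem_Icc]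
          omega
        · intro j hj
          simp only [mem_Icc] at hj
          simp only [mem_filter, mem_sigma, mem_range, mem_Ico]
          refine ⟨⟨?_, ?_, ?_⟩, trivial⟩ <;> omega
        · intro p hp
          simp only [mem_filter, mem_sigma, mem_range, mem_Ico] at hp
          obtain ⟨⟨h1, h2⟩, h3⟩ := hp
          exact Sigma.ext (by simp [h3]) (by simp)
        · intro j _
          rfl
        · intro p hp
          simp only [mem_filter, mem_sigma, mem_range, mem_Ico] at hp
          obtain ⟨⟨h1, h2⟩, h3⟩ := hp
          simp [h3]
      · -- pairs (j, s)
        refine Finset.prod_nbij' (fun p => p.1) (fun j => (⟨j, s⟩ : (_ : ℕ) × ℕ)) ?_ ?_ ?_ ?_ ?_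
        · intro p hp
          simp only [mem_filter, mem_sigma, mem_range, mem_Ico] at hp
          simp only [mem_range]
          omega
        · intro j hj
          simp only [mem_range] at hj
          simp only [mem_filter, mem_sigma, mem_range, mem_Ico]
          refine ⟨⟨?_, ?_, ?_⟩, trivial⟩ <;> omega
        · intro p hp
          simp only [mem_filter, mem_sigma, mem_range, mem_Ico] at hp
          obtain ⟨⟨h1, h2⟩, h3⟩ := hp
          exact Sigma.ext (by simp) (by simp [h3])
        · intro j _
          rfl
        · intro p hp
          simp only [mem_filter, mem_sigma, mem_range, mem_Ico] at hp
          obtain ⟨⟨h1, h2⟩, h3⟩ := hp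
          simp [h3]
    · -- disjointness
      rw [Finset.disjoint_filter]
      intro p hp h1 h2
      simp only [mem_sigma, mem_range, mem_Ico] at hp
      omega
  · -- avoiding-s pairs
    refine (Finset.prod_nbij' (fun p => (⟨es s p.1, es s p.2⟩ : (_ : ℕ) × ℕ))
      (fun q => (⟨ds s q.1, ds s q.2⟩ : (_ : ℕ) × ℕ)) ?_ ?_ ?_ ?_ ?_).symm
    · intro p hp
      simp only [mem_sigma, mem_range, mem_Ico] at hp
      simp only [mem_filter, mem_sigma, mem_range, mem_Ico, es]
      split_ifs <;> omega
    · intro q hq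
      simp only [mem_filter, mem_sigma, mem_range, mem_Ico] at hq
      simp only [mem_sigma, mem_range, mem_Ico, ds]
      split_ifs <;> omega
    · intro p hp
      simp only [mem_sigma, mem_range, mem_Ico] at hp
      refine Sigma.ext ?_ (heq_of_eq ?_) <;> (simp only [es, ds]; split_ifs <;> omega)
    · intro q hq
      simp only [mem_filter, mem_sigma, mem_range, mem_Ico] at hq
      refine Sigma.ext ?_ (heq_of_eq ?_) <;> (simp only [es, ds]; split_ifs <;> omega)
    · intro p _
      rfl



theorem catalan_sum_general_det (n : ℕ) (hn : 0 < n) (α : ℕ → ℕ)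
    (hα : ∀ i < n, α i < α (i + 1)) :
    Matrix.det (Matrix.of fun i j : Fin n =>
      (catalan (α i.1 + j.1) : ℚ) + (catalan (α (i.1 + 1) + j.1) : ℚ)) =
    (∏ i ∈ Finset.range (n + 1), ∏ j ∈ Finset.Ico (i + 1) (n + 1),
        ((α j : ℚ) - (α i : ℚ))) *
    (∏ i ∈ Finset.range n, (Nat.factorial (i + n) : ℚ) / (Nat.factorial (2 * i) : ℚ)) *
    (∏ i ∈ Finset.range (n + 1),
      (Nat.factorial (2 * α i) : ℚ) /
        ((Nat.factorial (α i) : ℚ) * (Nat.factorial (α i + n) : ℚ))) *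
    ∑ s ∈ Finset.range (n + 1),
      ((Nat.factorial (α s) : ℚ) * (Nat.factorial (α s + n) : ℚ)) /
        ((Nat.factorial (2 * α s) : ℚ) *
          (∏ j ∈ Finset.range s, ((α s : ℚ) - (α j : ℚ))) *
          ∏ j ∈ Finset.Icc (s + 1) n, ((α j : ℚ) - (α s : ℚ))) := by
  have αmono : ∀ j ≤ n, ∀ i < j, α i < α j := by
    intro j
    induction j with
    | zero => omega
    | succ j ih =>
        intro hj i hi
        have hstep : α j < α (j+1) := hα j (by omega)
        rcases Nat.lt_or_ge i j with h | h
        · exact lt_trans (ih (by omega) i h) hstep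
        · rw [show i = j by omega]
          exact hstep
  rw [det_expand n α, Finset.mul_sum]
  apply Finset.sum_congr rfl
  intro s hs
  rw [mem_range] at hs
  have hsn : s ≤ n := by omega
  rw [lemA n (fun i => α (es s i.1))]
  -- convert Fin products to range products
  rw [fin_pairs n (fun k i => ((α (es s k) : ℚ) - (α (es s i) : ℚ)))]
  rw [Fin.prod_univ_eq_prod_range (fun i => (Nat.factorial (2*(α (es s i))) : ℚ) /
      ((Nat.factorial (α (es s i)) : ℚ) * (Nat.factorial (α (es s i) + n) : ℚ))) n]
  -- split the Vandermonde and weight products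
  rw [vand_split n s hsn (fun i j => (α j : ℚ) - (α i : ℚ))]
  rw [prod_erase_reindex n s hsn (fun i => (Nat.factorial (2 * α i) : ℚ) /
        ((Nat.factorial (α i) : ℚ) * (Nat.factorial (α i + n) : ℚ)))]
  -- nonvanishing
  have hD1 : (∏ j ∈ range s, ((α s : ℚ) - (α j : ℚ))) ≠ 0 := by
    apply ne_of_gt
    apply Finset.prod_pos
    intro j hj
    rw [mem_range] at hj
    have := αmono s hsn j hj
    have : (α j : ℚ) < α s := by exact_mod_cast this
    linarith
  have hD2 : (∏ j ∈ Icc (s+1) n, ((α j : ℚ) - (α s : ℚ))) ≠ 0 := by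
    apply ne_of_gt
    apply Finset.prod_pos
    intro j hj
    rw [mem_Icc] at hj
    have := αmono j hj.2 s (by omega)
    have : (α s : ℚ) < α j := by exact_mod_cast this
    linarith
  have hf1 : (Nat.factorial (2 * α s) : ℚ) ≠ 0 := Nat.cast_ne_zero.mpr (Nat.factorial_ne_zero _)
  have hf2 : (Nat.factorial (α s) : ℚ) ≠ 0 := Nat.cast_ne_zero.mpr (Nat.factorial_ne_zero _)
  have hf3 : (Nat.factorial (α s + n) : ℚ) ≠ 0 := Nat.cast_ne_zero.mpr (Nat.factorial_ne_zero _)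
  field_simp
end

section
/- For non-negative integers c, d and a positive integer μ with c ≥ μd, the number of lattice paths from (0,0) to (c,d) using unit east and north steps that never pass above the line x = μy equals ((c − μd + 1)/(c + d + 1))·binom(c + d + 1, d). -/
open Finset

namespace BallotPathCount



/-- The set of valid words of length `n` with `c` east (`true`) steps. -/
def T (μ n c : ℕ) : Finset (Fin n → Bool) :=
  Finset.univ.filter (fun w =>
    (Finset.univ.filter (fun s : Fin n => w s = true)).card = c ∧
    ∀ t ≤ n,
      μ * (Finset.univ.filter (fun s : Fin n => s.1 < t ∧ w s = false)).card ≤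
        (Finset.univ.filter (fun s : Fin n => s.1 < t ∧ w s = true)).card)

lemma tot_split (n : ℕ) (w : Fin n → Bool) :
    (Finset.univ.filter (fun s : Fin n => w s = true)).card
      + (Finset.univ.filter (fun s : Fin n => w s = false)).card = n := by
  have := Finset.card_filter_add_card_filter_not
    (s := (Finset.univ : Finset (Fin n))) (p := fun s => w s = true)
  simp only [Bool.not_eq_true, Finset.card_univ, Fintype.card_fin] at this
  exact this

lemma pref_top (n t : ℕ) (ht : n ≤ t) (w : Fin n → Bool) (b : Bool) :
    (Finset.univ.filter (fun s : Fin n => s.1 < t ∧ w s = b)).card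
      = (Finset.univ.filter (fun s : Fin n => w s = b)).card := by
  congr 1
  apply Finset.filter_congr
  intro s _
  simp [lt_of_lt_of_le s.2 ht]

lemma pref_snoc (n : ℕ) (v : Fin n → Bool) (b b' : Bool) (t : ℕ) (ht : t ≤ n) :
    (Finset.univ.filter (fun s : Fin (n+1) => s.1 < t ∧ (Fin.snoc v b : Fin (n+1) → Bool) s = b')).card
      = (Finset.univ.filter (fun s : Fin n => s.1 < t ∧ v s = b')).card := by
  rw [Finset.card_filter, Finset.card_filter, Fin.sum_univ_castSucc]
  have hlast : ¬ ((Fin.last n).1 < t) := by simp; omega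
  simp [Fin.snoc_castSucc, Fin.snoc_last, hlast]
  exact fun hh => absurd hh (by omega)

lemma tot_snoc (n : ℕ) (v : Fin n → Bool) (b b' : Bool) :
    (Finset.univ.filter (fun s : Fin (n+1) => (Fin.snoc v b : Fin (n+1) → Bool) s = b')).card
      = (Finset.univ.filter (fun s : Fin n => v s = b')).card + if b = b' then 1 else 0 := by
  rw [Finset.card_filter, Finset.card_filter, Fin.sum_univ_castSucc]
  simp [Fin.snoc_castSucc, Fin.snoc_last]

lemma mem_T (μ n c : ℕ) (w : Fin n → Bool) :
    w ∈ T μ n c ↔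
    ((Finset.univ.filter (fun s : Fin n => w s = true)).card = c ∧
    ∀ t ≤ n,
      μ * (Finset.univ.filter (fun s : Fin n => s.1 < t ∧ w s = false)).card ≤
        (Finset.univ.filter (fun s : Fin n => s.1 < t ∧ w s = true)).card) := by
  simp [T]

lemma T_endpoint (μ n c : ℕ) (w : Fin n → Bool) (hw : w ∈ T μ n c) :
    μ * (n - c) ≤ c := by
  rw [mem_T] at hw
  obtain ⟨hc, hcond⟩ := hw
  have h := hcond n le_rfl
  rw [pref_top n n le_rfl, pref_top n n le_rfl] at h
  have hs := tot_split n w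
  rw [hc] at h hs
  have : (Finset.univ.filter (fun s : Fin n => w s = false)).card = n - c := by omega
  rw [this] at h
  exact h

lemma T_empty_of (μ n c : ℕ) (h : ¬ μ * (n - c) ≤ c) : T μ n c = ∅ := by
  rw [Finset.eq_empty_iff_forall_notMem]
  exact fun w hw => h (T_endpoint μ n c w hw)

lemma T_diag (μ n : ℕ) : T μ n n = {fun _ => true} := by
  ext w
  rw [mem_T, Finset.mem_singleton]
  constructor
  · rintro ⟨hc, -⟩
    have huniv : Finset.univ.filter (fun s : Fin n => w s = true) = Finset.univ := by
      apply Finset.eq_univ_of_card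
      simp [hc]
    funext s
    have hs : s ∈ Finset.univ.filter (fun s : Fin n => w s = true) := by
      rw [huniv]; exact Finset.mem_univ s
    simpa using hs
  · rintro rfl
    constructor
    · simp
    · intro t ht
      simp

lemma card_last_true (μ n c : ℕ) :
    ((T μ (n+1) (c+1)).filter (fun w => w (Fin.last n) = true)).card = (T μ n c).card := by
  refine Finset.card_bij' (i := fun w _ => Fin.init w) (j := fun v _ => Fin.snoc v true) ?hi ?hj ?li ?ri
  · -- hi : init w ∈ T μ n c
    intro w hw
    rw [Finset.mem_filter] at hw
    obtain ⟨hw, hlast⟩ := hw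
    have hsnoc : (Fin.snoc (Fin.init w) true : Fin (n+1) → Bool) = w := by
      rw [← hlast]; exact Fin.snoc_init_self w
    rw [mem_T] at hw ⊢
    obtain ⟨hc, hcond⟩ := hw
    constructor
    · have := tot_snoc n (Fin.init w) true true
      rw [hsnoc, hc] at this
      simpa using this.symm
    · intro t ht
      have h := hcond t (by omega)
      have h1 := pref_snoc n (Fin.init w) true false t ht
      have h2 := pref_snoc n (Fin.init w) true true t ht
      rw [hsnoc] at h1 h2
      rw [← h1, ← h2]
      exact h
  · -- hj : snoc v true ∈ filter
    intro v hv
    rw [mem_T] at hv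
    obtain ⟨hc, hcond⟩ := hv
    rw [Finset.mem_filter, mem_T]
    refine ⟨⟨?_, ?_⟩, by simp⟩
    · rw [tot_snoc n v true true, hc]; simp
    · intro t ht
      rcases le_or_gt t n with h | h
      · rw [pref_snoc n v true false t h, pref_snoc n v true true t h]
        exact hcond t h
      · have ht' : n + 1 ≤ t := by omega
        rw [pref_top (n+1) t ht', pref_top (n+1) t ht',
          tot_snoc n v true false, tot_snoc n v true true]
        have h0 := hcond n le_rfl
        rw [pref_top n n le_rfl, pref_top n n le_rfl] at h0
        norm_num
        omega
  · intro w hw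
    rw [Finset.mem_filter] at hw
    have hsi := Fin.snoc_init_self w
    rwa [hw.2] at hsi
  · intro v _
    exact Fin.init_snoc (α := fun _ : Fin (n+1) => Bool) (x := true) (p := v)

lemma card_last_false (μ n c : ℕ) (hend : μ * ((n+1) - c) ≤ c) :
    ((T μ (n+1) c).filter (fun w => w (Fin.last n) = false)).card = (T μ n c).card := by
  refine Finset.card_bij' (i := fun w _ => Fin.init w) (j := fun v _ => Fin.snoc v false) ?hi ?hj ?li ?ri
  · intro w hw
    rw [Finset.mem_filter] at hw
    obtain ⟨hw, hlast⟩ := hw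
    have hsnoc : (Fin.snoc (Fin.init w) false : Fin (n+1) → Bool) = w := by
      rw [← hlast]; exact Fin.snoc_init_self w
    rw [mem_T] at hw ⊢
    obtain ⟨hc, hcond⟩ := hw
    constructor
    · have := tot_snoc n (Fin.init w) false true
      rw [hsnoc, hc] at this
      simpa using this.symm
    · intro t ht
      have h1 := pref_snoc n (Fin.init w) false false t ht
      have h2 := pref_snoc n (Fin.init w) false true t ht
      rw [hsnoc] at h1 h2
      rw [← h1, ← h2]
      exact hcond t (by omega)
  · intro v hv
    rw [mem_T] at hv
    obtain ⟨hc, hcond⟩ := hv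
    have hcn : c ≤ n := by
      rw [← hc]
      exact le_trans (Finset.card_filter_le _ _) (by simp)
    rw [Finset.mem_filter, mem_T]
    refine ⟨⟨?_, ?_⟩, by simp⟩
    · rw [tot_snoc n v false true, hc]; simp
    · intro t ht
      rcases le_or_gt t n with h | h
      · rw [pref_snoc n v false false t h, pref_snoc n v false true t h]
        exact hcond t h
      · have ht' : n + 1 ≤ t := by omega
        rw [pref_top (n+1) t ht', pref_top (n+1) t ht',
          tot_snoc n v false false, tot_snoc n v false true]
        have hfc : (Finset.univ.filter (fun s : Fin n => v s = false)).card = n - c := by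
          have := tot_split n v; omega
        rw [hc, hfc]
        have hnc : n + 1 - c = n - c + 1 := by omega
        rw [hnc] at hend
        norm_num
        omega
  · intro w hw
    rw [Finset.mem_filter] at hw
    have hsi := Fin.snoc_init_self w
    rwa [hw.2] at hsi
  · intro v _
    exact Fin.init_snoc (α := fun _ : Fin (n+1) => Bool) (x := false) (p := v)

lemma TR (μ n c : ℕ) :
    (T μ (n+1) (c+1)).card
      = (T μ n c).card + (if μ * (n - c) ≤ c + 1 then (T μ n (c+1)).card else 0) := by
  by_cases hend : μ * (n - c) ≤ c + 1
  · rw [if_pos hend]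
    have hend' : μ * ((n+1) - (c+1)) ≤ c + 1 := by
      have e : (n+1) - (c+1) = n - c := by omega
      rw [e]; exact hend
    have hf := card_last_false μ n (c+1) hend'
    have hsplit := Finset.card_filter_add_card_filter_not
      (s := T μ (n+1) (c+1)) (p := fun w => w (Fin.last n) = true)
    simp only [Bool.not_eq_true] at hsplit
    rw [card_last_true, hf] at hsplit
    exact hsplit.symm
  · rw [if_neg hend]
    have h1 : T μ (n+1) (c+1) = ∅ := T_empty_of _ _ _ (by
      have e : (n+1) - (c+1) = n - c := by omega
      rw [e]; exact hend)
    have h2 : T μ n c = ∅ := T_empty_of _ _ _ (fun hcon => hend (le_trans hcon (by omega)))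
    simp [h1, h2]

lemma closed (μ : ℕ) (hμ : 0 < μ) : ∀ N a d : ℕ, μ * d + a + d ≤ N →
    (T μ (μ*d + a + d) (μ*d + a)).card * (μ*d + a + d + 1)
      = (a + 1) * ((μ*d + a + d + 1).choose d) := by
  intro N
  induction N with
  | zero =>
    intro a d h
    have hd : d = 0 := by
      by_contra hd
      have : 1 ≤ μ * d := Nat.one_le_iff_ne_zero.mpr (by positivity)
      omega
    have ha : a = 0 := by omega
    subst hd ha
    simp [T_diag]
  | succ N ih =>
    intro a d h
    match d with
    | 0 =>
      have e : μ * 0 + a + 0 = a := by omega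
      have e' : μ * 0 + a = a := by omega
      rw [e, e']
      rw [T_diag]
      simp
    | Nat.succ d' =>
      simp only [Nat.succ_eq_add_one] at h ⊢
      have hexp : μ * (d'+1) = μ * d' + μ := by ring
      have hexp2 : (μ+1) * (d'+1) = μ * d' + μ + d' + 1 := by ring
      have h1μ : 1 ≤ μ * (d'+1) := Nat.succ_le_of_lt (Nat.mul_pos hμ (Nat.succ_pos d'))
      obtain ⟨c'', hc''⟩ : ∃ k, μ * (d'+1) + a = k + 1 := ⟨μ*(d'+1)+a-1, by omega⟩
      set m : ℕ := c'' + (d'+1) with hm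
      have e0 : μ*(d'+1) + a + (d'+1) = m + 1 := by omega
      rw [e0, hc'']
      -- goal : (T μ (m+1) (c''+1)).card * (m+1+1) = (a+1) * ((m+1+1).choose (d'+1))
      have hsub : m - c'' = d' + 1 := by omega
      have hrec : (T μ (m+1) (c''+1)).card
          = (T μ m c'').card + (T μ m (c''+1)).card := by
        rw [TR, hsub, if_pos (by omega)]
      have h1 : (T μ m c'').card * (m+1) = a * ((m+1).choose (d'+1)) := by
        match a, hc'' with
        | 0, hc'' =>
          have he : T μ m c'' = ∅ := T_empty_of _ _ _ (by rw [hsub]; omega)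
          rw [he]; simp
        | Nat.succ a'', hc'' =>
          have key := ih a'' (d'+1) (by omega)
          have e1 : μ*(d'+1) + a'' = c'' := by omega
          have e2 : μ*(d'+1) + a'' + (d'+1) = m := by omega
          rw [e2, e1] at key
          simpa using key
      have h2 : (T μ m (c''+1)).card * (m+1) = (μ + a + 1) * ((m+1).choose d') := by
        have key := ih (μ + a) d' (by omega)
        have e1 : μ*d' + (μ + a) = c'' + 1 := by omega
        have e2 : μ*d' + (μ + a) + d' = m := by omega
        rw [e2, e1] at key
        simpa using key
      have k1 : (m+1+1) * ((m+1).choose d') = ((m+1+1).choose (d'+1)) * (d'+1) := by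
        exact Nat.add_one_mul_choose_eq (m+1) d'
      have pascal : (m+1+1).choose (d'+1) = (m+1).choose d' + (m+1).choose (d'+1) := by
        exact Nat.choose_succ_succ' (m+1) d'
      -- pass to ℚ and cancel (m+1)
      have hmQ : ((m:ℚ) + 1) ≠ 0 := by positivity
      have goalQ : ((T μ (m+1) (c''+1)).card : ℚ) * ((m:ℚ)+1+1)
          = ((a:ℚ)+1) * (((m+1+1).choose (d'+1) : ℕ) : ℚ) := by
        apply mul_right_cancel₀ hmQ
        have H0 : ((T μ (m+1) (c''+1)).card : ℚ)
            = ((T μ m c'').card : ℚ) + ((T μ m (c''+1)).card : ℚ) := by exact_mod_cast hrec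
        have H1 : ((T μ m c'').card : ℚ) * ((m:ℚ)+1)
            = (a:ℚ) * (((m+1).choose (d'+1) : ℕ) : ℚ) := by exact_mod_cast h1
        have H2 : ((T μ m (c''+1)).card : ℚ) * ((m:ℚ)+1)
            = ((μ:ℚ) + a + 1) * (((m+1).choose d' : ℕ) : ℚ) := by exact_mod_cast h2
        have K : ((m:ℚ)+1+1) * (((m+1).choose d' : ℕ) : ℚ)
            = (((m+1+1).choose (d'+1) : ℕ) : ℚ) * ((d':ℚ)+1) := by exact_mod_cast k1
        have P : (((m+1+1).choose (d'+1) : ℕ) : ℚ)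
            = (((m+1).choose d' : ℕ) : ℚ) + (((m+1).choose (d'+1) : ℕ) : ℚ) := by
          exact_mod_cast pascal
        have E : ((m:ℚ) + 1) = ((μ:ℚ)+1) * ((d':ℚ)+1) + (a:ℚ) := by
          have : m + 1 = (μ+1) * (d'+1) + a := by omega
          exact_mod_cast this
        linear_combination (((m:ℚ)+1+1) * ((m:ℚ)+1)) * H0 + ((m:ℚ)+1+1) * H1 + ((m:ℚ)+1+1) * H2
          + ((μ:ℚ)+1) * K + (-(a:ℚ) * ((m:ℚ)+1+1)) * P
          + (-((((m+1+1).choose (d'+1) : ℕ) : ℚ))) * E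
      exact_mod_cast goalQ


end BallotPathCount

/-- A lattice path from `(0,0)` to `(c,d)` is encoded by a word `w : Fin (c+d) → Bool`,
where `true` is a unit east step and `false` a unit north step. -/
theorem ballot_style_path_count (c d μ : ℕ) (hμ : 0 < μ) (h : μ * d ≤ c) :
    ((Finset.univ.filter (fun w : Fin (c + d) → Bool =>
        (Finset.univ.filter (fun s : Fin (c + d) => w s = true)).card = c ∧
        ∀ t ≤ c + d,
          μ * (Finset.univ.filter (fun s : Fin (c + d) => s.1 < t ∧ w s = false)).card ≤
            (Finset.univ.filter (fun s : Fin (c + d) => s.1 < t ∧ w s = true)).card)).card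
      : ℚ) =
    ((c - μ * d + 1 : ℕ) : ℚ) / ((c + d + 1 : ℕ) : ℚ) * (Nat.choose (c + d + 1) d : ℚ) := by
  have hLHS : (Finset.univ.filter (fun w : Fin (c + d) → Bool =>
        (Finset.univ.filter (fun s : Fin (c + d) => w s = true)).card = c ∧
        ∀ t ≤ c + d,
          μ * (Finset.univ.filter (fun s : Fin (c + d) => s.1 < t ∧ w s = false)).card ≤
            (Finset.univ.filter (fun s : Fin (c + d) => s.1 < t ∧ w s = true)).card)).card
      = (BallotPathCount.T μ (c+d) c).card := rfl
  rw [hLHS]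
  clear hLHS
  obtain ⟨a, ha⟩ : ∃ a, μ * d + a = c := ⟨c - μ * d, by omega⟩
  have key := BallotPathCount.closed μ hμ (μ*d + a + d) a d le_rfl
  have e1 : μ*d + a = c := ha
  have e2 : μ*d + a + d = c + d := by omega
  rw [e2, e1] at key
  have ea : c - μ * d + 1 = a + 1 := by omega
  rw [ea]
  have keyQ : ((BallotPathCount.T μ (c+d) c).card : ℚ) * ((c:ℚ)+d+1)
      = ((a:ℚ)+1) * (((c+d+1).choose d : ℕ) : ℚ) := by exact_mod_cast key
  have hne : ((c:ℚ)+d+1) ≠ 0 := by positivity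
  rw [div_mul_eq_mul_div, eq_div_iff (by push_cast; exact hne)]
  push_cast at keyQ ⊢
  linear_combination keyQ
end
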